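/- arXiv:2601.03107 — 2 statements merged into one kernel-verified Lean document; each statement's English description precedes it below -/
import Mathlib

section
/- Let d ≥ 2 and let f be an admissible density on ℝ^d with ∫ f = 1, ∫ v f(v) dv = 0 and ∫ |v|² f(v) dv = d, and let T := ∫ (v⊗v) f(v) dv. Define k(v) := a(v) + d·Id − T. Then D(f) = i_k(f) − d(d−1), i.e. the entropy production equals the directional Fisher information in the directions of k minus the constant d(d−1). -/
open MeasureTheory Real

noncomputable section

/-- `ℝ^d` as a Euclidean space. -/
abbrev Ed (d : ℕ) : Type := EuclideanSpace ℝ (Fin d)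

/-- The matrix `a(z) = |z|² Id − z ⊗ z`. -/
def matA {d : ℕ} (z : Ed d) : Matrix (Fin d) (Fin d) ℝ :=
  Matrix.of fun i j => ‖z‖ ^ 2 * (if i = j then (1 : ℝ) else 0) - z i * z j

/-- The pairing `A : x^{⊗2} = ∑_{i,j} A_{ij} x_i x_j`. -/
def qf {ι : Type*} [Fintype ι] (A : Matrix ι ι ℝ) (x : ι → ℝ) : ℝ :=
  ∑ i, ∑ j, A i j * (x i * x j)

/-- `i`-th component of `∇ log f`. -/
def pgradLog {d : ℕ} (f : Ed d → ℝ) (v : Ed d) (i : Fin d) : ℝ :=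
  fderiv ℝ (fun x => Real.log (f x)) v (EuclideanSpace.single i 1)

/-- The entropy production functional `D(f)`. -/
def entropyProd {d : ℕ} (f : Ed d → ℝ) : ℝ :=
  (1 / 2) * ∫ p : Ed d × Ed d,
    qf (matA (p.1 - p.2)) (fun i => pgradLog f p.1 i - pgradLog f p.2 i) * (f p.1 * f p.2)

/-- An admissible density: smooth, positive, rapidly decaying with all derivatives,
with `∇ log f` of polynomial growth. -/
structure IsAdmissible {E : Type*} [NormedAddCommGroup E] [NormedSpace ℝ E]
    (f : E → ℝ) : Prop where
  smooth : ContDiff ℝ (⊤ : ℕ∞) f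
  pos : ∀ x, 0 < f x
  decay : ∀ n k : ℕ, ∃ C : ℝ, ∀ x, ‖iteratedFDeriv ℝ n f x‖ * (1 + ‖x‖) ^ k ≤ C
  gradLog_poly : ∃ C : ℝ, ∃ k : ℕ, ∀ x, ‖fderiv ℝ (fun y => Real.log (f y)) x‖ ≤ C * (1 + ‖x‖) ^ k

/-- Temperature tensor `T_{ij} = ∫ v_i v_j f`. -/
def temperature {d : ℕ} (f : Ed d → ℝ) : Matrix (Fin d) (Fin d) ℝ :=
  Matrix.of fun i j => ∫ v : Ed d, v i * v j * f v

/-- Largest directional temperature. -/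
def Tmax {d : ℕ} (f : Ed d → ℝ) : ℝ := ⨆ i, temperature f i i

/-- Normalized density: unit mass, zero momentum, diagonal temperature tensor with trace `d`. -/
structure IsNormalized {d : ℕ} (f : Ed d → ℝ) : Prop where
  mass : ∫ v : Ed d, f v = 1
  momentum : ∀ i, ∫ v : Ed d, v i * f v = 0
  temp_diag : ∀ i j, i ≠ j → temperature f i j = 0
  temp_trace : ∑ i, temperature f i i = d

/-- The right-hand side of the Landau equation with Maxwell molecules:
`∇_v · ∫ a(v-w) (∇_v - ∇_w)[f(v)f(w)] dw`. -/
def landauRHS {d : ℕ} (f : Ed d → ℝ) (v : Ed d) : ℝ :=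
  ∑ i, fderiv ℝ
    (fun v' : Ed d => ∫ w : Ed d, ∑ j,
      matA (v' - w) i j *
        (f w * fderiv ℝ f v' (EuclideanSpace.single j 1)
          - f v' * fderiv ℝ f w (EuclideanSpace.single j 1)))
    v (EuclideanSpace.single i 1)

/-- Solution of the Landau–Maxwell equation: a family of admissible densities, smooth in
`(t,v)`, solving the equation, conserving mass, momentum and energy. -/
structure IsLandauSolution (d : ℕ) (f : ℝ → Ed d → ℝ) : Prop where
  admissible : ∀ t : ℝ, 0 ≤ t → IsAdmissible (f t)
  smooth : ContDiffOn ℝ (⊤ : ℕ∞) (fun p : ℝ × Ed d => f p.1 p.2) (Set.Ioi (0 : ℝ) ×ˢ Set.univ)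
  pde : ∀ t : ℝ, 0 < t → ∀ v : Ed d, HasDerivAt (fun s => f s v) (landauRHS (f t) v) t
  mass : ∀ t : ℝ, 0 ≤ t → ∫ v : Ed d, f t v = 1
  momentum : ∀ t : ℝ, 0 ≤ t → ∀ i, ∫ v : Ed d, v i * f t v = 0
  energy : ∀ t : ℝ, 0 ≤ t → ∫ v : Ed d, ‖v‖ ^ 2 * f t v = d

/-- One-variable directional Fisher information `i_s(f)`. -/
def iFisher {d : ℕ} (s : Ed d → Matrix (Fin d) (Fin d) ℝ) (f : Ed d → ℝ) : ℝ :=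
  ∫ v : Ed d, f v * qf (s v) (pgradLog f v)

/-- Full gradient on `ℝ^{2d}` as a `Fin d ⊕ Fin d`-indexed vector. -/
def fullGrad {d : ℕ} (F : Ed d × Ed d → ℝ) (p : Ed d × Ed d) : Fin d ⊕ Fin d → ℝ :=
  Sum.elim (fun i => fderiv ℝ F p (EuclideanSpace.single i 1, 0))
    (fun i => fderiv ℝ F p (0, EuclideanSpace.single i 1))

/-- Lifted directional Fisher information `I_S(F)`. -/
def IFisher {d : ℕ} (S : Ed d × Ed d → Matrix (Fin d ⊕ Fin d) (Fin d ⊕ Fin d) ℝ)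
    (F : Ed d × Ed d → ℝ) : ℝ :=
  ∫ p : Ed d × Ed d, F p * qf (S p) (fullGrad (fun q => Real.log (F q)) p)

/-- First Gâteaux derivative `⟨I'_S(G), H⟩`. -/
def Ider1 {d : ℕ} (S : Ed d × Ed d → Matrix (Fin d ⊕ Fin d) (Fin d ⊕ Fin d) ℝ)
    (G H : Ed d × Ed d → ℝ) : ℝ :=
  deriv (fun ε : ℝ => IFisher S (fun p => G p + ε * H p)) 0

/-- Second Gâteaux derivative `⟨I''_S(G) H, H⟩`. -/
def Ider2 {d : ℕ} (S : Ed d × Ed d → Matrix (Fin d ⊕ Fin d) (Fin d ⊕ Fin d) ℝ)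
    (G H : Ed d × Ed d → ℝ) : ℝ :=
  deriv (deriv (fun ε : ℝ => IFisher S (fun p => G p + ε * H p))) 0

/-- `b_{kl}(z) = z_k e_l − z_l e_k`. -/
def bvec {d : ℕ} (k l : Fin d) (z : Ed d) : Ed d :=
  EuclideanSpace.single l (z k) - EuclideanSpace.single k (z l)

/-- `b̃_{kl}(v,w) = (b_{kl}(v−w), −b_{kl}(v−w))`. -/
def btilde {d : ℕ} (k l : Fin d) (p : Ed d × Ed d) : Ed d × Ed d :=
  (bvec k l (p.1 - p.2), -bvec k l (p.1 - p.2))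

/-- Directional derivative `b̃_{kl}·∇F`. -/
def bDeriv {d : ℕ} (k l : Fin d) (F : Ed d × Ed d → ℝ) (p : Ed d × Ed d) : ℝ :=
  fderiv ℝ F p (btilde k l p)

/-- Block-diagonal `2d × 2d` matrix. -/
def blockDiag {d : ℕ} (A B : Matrix (Fin d) (Fin d) ℝ) :
    Matrix (Fin d ⊕ Fin d) (Fin d ⊕ Fin d) ℝ :=
  Matrix.fromBlocks A 0 0 B

/-- `k(v) = a(v) + d·Id − T`. -/
def kmat {d : ℕ} (T : Matrix (Fin d) (Fin d) ℝ) (v : Ed d) : Matrix (Fin d) (Fin d) ℝ :=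
  matA v + (d : ℝ) • 1 - T

/-- `K(v,w) = diag(k(v), k(w))`. -/
def Kmat {d : ℕ} (T : Matrix (Fin d) (Fin d) ℝ) (p : Ed d × Ed d) :
    Matrix (Fin d ⊕ Fin d) (Fin d ⊕ Fin d) ℝ :=
  blockDiag (kmat T p.1) (kmat T p.2)

/-- `𝒯 = diag(T, T)`. -/
def liftedT {d : ℕ} (T : Matrix (Fin d) (Fin d) ℝ) :
    Matrix (Fin d ⊕ Fin d) (Fin d ⊕ Fin d) ℝ :=
  blockDiag T T

/-- Lifted Landau operator `Q(F) = (∇_v−∇_w)·(a(v−w)(∇_v−∇_w)F)`. -/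
def Qop {d : ℕ} (F : Ed d × Ed d → ℝ) (p : Ed d × Ed d) : ℝ :=
  ∑ i, fderiv ℝ
    (fun q : Ed d × Ed d => ∑ j, matA (q.1 - q.2) i j *
      (fderiv ℝ F q (EuclideanSpace.single j 1, 0) - fderiv ℝ F q (0, EuclideanSpace.single j 1)))
    p (EuclideanSpace.single i 1, -EuclideanSpace.single i 1)

/-- Maxwellian equilibrium on `ℝ^{2d}`. -/
def maxwellM {d : ℕ} (p : Ed d × Ed d) : ℝ :=
  ((2 * π) ^ d)⁻¹ * Real.exp (-(‖p.1‖ ^ 2 + ‖p.2‖ ^ 2) / 2)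

/-- Relative lifted Fisher information `I_S(F/M)`. -/
def IFisherRel {d : ℕ} (S : Ed d × Ed d → Matrix (Fin d ⊕ Fin d) (Fin d ⊕ Fin d) ℝ)
    (F : Ed d × Ed d → ℝ) : ℝ :=
  ∫ p : Ed d × Ed d, F p * qf (S p) (fullGrad (fun q => Real.log (F q / maxwellM q)) p)

/-- `b̃_{ij}` as a `Fin d ⊕ Fin d`-indexed vector. -/
def btildeVec {d : ℕ} (i j : Fin d) (p : Ed d × Ed d) : Fin d ⊕ Fin d → ℝ :=
  Sum.elim (fun x => bvec i j (p.1 - p.2) x) (fun x => -bvec i j (p.1 - p.2) x)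

/-- `Π(v,w) = |v−w|^{-2} ∑_{i<j} b̃_{ij} ⊗ b̃_{ij}`. -/
def PiMat {d : ℕ} (p : Ed d × Ed d) : Matrix (Fin d ⊕ Fin d) (Fin d ⊕ Fin d) ℝ :=
  Matrix.of fun x y => (‖p.1 - p.2‖ ^ 2)⁻¹ *
    ∑ i : Fin d, ∑ j : Fin d, if i < j then btildeVec i j p x * btildeVec i j p y else 0

/-- Surface measure on the unit sphere of `ℝ^d`. -/
def sphereμ (d : ℕ) : Measure (Metric.sphere (0 : Ed d) 1) :=
  (volume : Measure (Ed d)).toSphere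

/-- The Bakry–Émery `Γ₂` criterion on `S^{d−1}` with constant `Λ`. -/
def Gamma2Holds (d : ℕ) (Λ : ℝ) : Prop :=
  ∀ g : Ed d → ℝ, ContDiff ℝ (⊤ : ℕ∞) g → (∀ x, 0 < g x) →
    (∀ σ : Metric.sphere (0 : Ed d) 1, g (-(σ : Ed d)) = g (σ : Ed d)) →
    Λ * (∑ k : Fin d, ∑ l : Fin d, if k < l then
        ∫ σ : Metric.sphere (0 : Ed d) 1,
          g (σ : Ed d) *
            (fderiv ℝ (fun x => Real.log (g x)) (σ : Ed d) (bvec k l (σ : Ed d))) ^ 2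
          ∂(sphereμ d)
      else 0)
    ≤ ∑ i : Fin d, ∑ j : Fin d, if i < j then
        (∑ k : Fin d, ∑ l : Fin d, if k < l then
          ∫ σ : Metric.sphere (0 : Ed d) 1,
            g (σ : Ed d) *
              (fderiv ℝ (fun x => fderiv ℝ (fun y => Real.log (g y)) x (bvec k l x))
                (σ : Ed d) (bvec i j (σ : Ed d))) ^ 2
            ∂(sphereμ d)
        else 0)
      else 0


namespace EProof

variable {d : ℕ}

lemma norm_sq_eq (z : Ed d) : ‖z‖ ^ 2 = ∑ k, z k ^ 2 := by
  rw [EuclideanSpace.norm_eq, Real.sq_sqrt (by positivity)]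
  simp [sq_abs]

lemma coord_abs_le (z : Ed d) (k : Fin d) : |z k| ≤ ‖z‖ := by
  have h1 : z k ^ 2 ≤ ∑ i, z i ^ 2 :=
    Finset.single_le_sum (f := fun i => z i ^ 2) (fun i _ => sq_nonneg _) (Finset.mem_univ k)
  nlinarith [norm_nonneg z, abs_nonneg (z k), sq_abs (z k), norm_sq_eq z]

lemma fderiv_coord (k : Fin d) (x u : Ed d) :
    fderiv ℝ (fun y : Ed d => y k) x u = u k := by
  have : (fun y : Ed d => y k) = ⇑(EuclideanSpace.proj (𝕜 := ℝ) k) := rfl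
  rw [this, ContinuousLinearMap.fderiv]; rfl

lemma differentiable_coord (k : Fin d) : Differentiable ℝ (fun y : Ed d => y k) :=
  (EuclideanSpace.proj (𝕜 := ℝ) k).differentiable

variable {f : Ed d → ℝ}

lemma hfd (hf : IsAdmissible f) : Differentiable ℝ f := hf.smooth.differentiable (by simp)

lemma fderiv_log_eq (hf : IsAdmissible f) (v : Ed d) :
    fderiv ℝ (fun x => Real.log (f x)) v = (f v)⁻¹ • fderiv ℝ f v :=
  (((hfd hf) v).hasFDerivAt.log (hf.pos v).ne').fderiv

lemma pgradLog_mul (hf : IsAdmissible f) (v : Ed d) (i : Fin d) :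
    pgradLog f v i * f v = fderiv ℝ f v (EuclideanSpace.single i 1) := by
  rw [pgradLog, fderiv_log_eq hf]
  simp only [ContinuousLinearMap.coe_smul', Pi.smul_apply, smul_eq_mul]
  rw [mul_comm, ← mul_assoc, mul_inv_cancel₀ (hf.pos v).ne', one_mul]

lemma cont_fderiv (hf : IsAdmissible f) : Continuous (fun v : Ed d => fderiv ℝ f v) :=
  (hf.smooth.fderiv_right (m := (⊤ : ℕ∞)) (by simp)).continuous

lemma cont_Df (hf : IsAdmissible f) (j : Fin d) :
    Continuous (fun v : Ed d => fderiv ℝ f v (EuclideanSpace.single j 1)) :=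
  (cont_fderiv hf).clm_apply continuous_const

lemma cont_g (hf : IsAdmissible f) (i : Fin d) : Continuous (fun v => pgradLog f v i) := by
  have : (fun v => pgradLog f v i)
      = fun v => (f v)⁻¹ * fderiv ℝ f v (EuclideanSpace.single i 1) := by
    funext v
    rw [pgradLog, fderiv_log_eq hf]; rfl
  rw [this]
  exact (hf.smooth.continuous.inv₀ (fun v => (hf.pos v).ne')).mul (cont_Df hf i)

lemma abs_Df_le (v : Ed d) (j : Fin d) :
    |fderiv ℝ f v (EuclideanSpace.single j 1)| ≤ ‖fderiv ℝ f v‖ := by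
  calc |fderiv ℝ f v (EuclideanSpace.single j 1)|
      ≤ ‖fderiv ℝ f v‖ * ‖EuclideanSpace.single j (1:ℝ)‖ := (fderiv ℝ f v).le_opNorm _
    _ = ‖fderiv ℝ f v‖ := by rw [EuclideanSpace.norm_single]; simp

lemma norm_fderiv_le_it1 (v : Ed d) : ‖fderiv ℝ f v‖ ≤ ‖iteratedFDeriv ℝ 1 f v‖ := by
  apply ContinuousLinearMap.opNorm_le_bound _ (norm_nonneg _)
  intro e
  have h : fderiv ℝ f v e = iteratedFDeriv ℝ 1 f v (fun _ => e) := by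
    rw [iteratedFDeriv_one_apply]
  rw [h]
  calc ‖iteratedFDeriv ℝ 1 f v (fun _ => e)‖
      ≤ ‖iteratedFDeriv ℝ 1 f v‖ * ∏ _i : Fin 1, ‖e‖ := (iteratedFDeriv ℝ 1 f v).le_opNorm _
    _ = ‖iteratedFDeriv ℝ 1 f v‖ * ‖e‖ := by simp

end EProof

namespace EProof

variable {d : ℕ} {f : Ed d → ℝ}

def PolyG (q : Ed d → ℝ) : Prop :=
  Continuous q ∧ ∃ C : ℝ, ∃ n : ℕ, ∀ v, |q v| ≤ C * (1 + ‖v‖) ^ n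

def DomB (f h : Ed d → ℝ) : Prop :=
  Continuous h ∧ ∃ C : ℝ, ∃ n : ℕ, ∀ v, |h v| ≤ C * (1 + ‖v‖) ^ n * (f v + ‖fderiv ℝ f v‖)

lemma one_add_norm_pos (v : Ed d) : (0:ℝ) < 1 + ‖v‖ := by positivity

lemma polyg_const (c : ℝ) : PolyG (d := d) (fun _ => c) :=
  ⟨continuous_const, |c|, 0, fun v => by simp⟩

lemma polyg_coord (k : Fin d) : PolyG (fun v : Ed d => v k) := by
  refine ⟨(EuclideanSpace.proj (𝕜 := ℝ) k).continuous, 1, 1, fun v => ?_⟩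
  have := coord_abs_le v k
  have := norm_nonneg v
  simp only [pow_one, one_mul]
  linarith

lemma PolyG.nonnegC {q : Ed d → ℝ} (C : ℝ) (n : ℕ) (hb : ∀ v, |q v| ≤ C * (1 + ‖v‖) ^ n) :
    0 ≤ C := by
  have h := hb 0
  have h2 : (0:ℝ) ≤ |q 0| := abs_nonneg _
  simp only [norm_zero, add_zero, one_pow, mul_one] at h
  linarith

lemma PolyG.mul {q r : Ed d → ℝ} (hq : PolyG q) (hr : PolyG r) : PolyG (fun v => q v * r v) := by
  obtain ⟨hqc, Cq, nq, hqb⟩ := hq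
  obtain ⟨hrc, Cr, nr, hrb⟩ := hr
  refine ⟨hqc.mul hrc, Cq * Cr, nq + nr, fun v => ?_⟩
  have h1 := hqb v; have h2 := hrb v
  have hCq := PolyG.nonnegC Cq nq hqb
  have hCr := PolyG.nonnegC Cr nr hrb
  have hp := one_add_norm_pos v
  calc |q v * r v| = |q v| * |r v| := abs_mul _ _
    _ ≤ (Cq * (1 + ‖v‖) ^ nq) * (Cr * (1 + ‖v‖) ^ nr) :=
        mul_le_mul h1 h2 (abs_nonneg _) (by positivity)
    _ = Cq * Cr * (1 + ‖v‖) ^ (nq + nr) := by rw [pow_add]; ring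

lemma PolyG.neg {q : Ed d → ℝ} (hq : PolyG q) : PolyG (fun v => -q v) := by
  obtain ⟨hqc, Cq, nq, hqb⟩ := hq
  exact ⟨hqc.neg, Cq, nq, fun v => by rw [abs_neg]; exact hqb v⟩

lemma PolyG.add {q r : Ed d → ℝ} (hq : PolyG q) (hr : PolyG r) : PolyG (fun v => q v + r v) := by
  obtain ⟨hqc, Cq, nq, hqb⟩ := hq
  obtain ⟨hrc, Cr, nr, hrb⟩ := hr
  have hCq := PolyG.nonnegC Cq nq hqb
  have hCr := PolyG.nonnegC Cr nr hrb
  refine ⟨hqc.add hrc, Cq + Cr, max nq nr, fun v => ?_⟩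
  have hp : (1:ℝ) ≤ 1 + ‖v‖ := by have := norm_nonneg v; linarith
  have e1 : (1 + ‖v‖) ^ nq ≤ (1 + ‖v‖) ^ max nq nr := pow_le_pow_right₀ hp (le_max_left _ _)
  have e2 : (1 + ‖v‖) ^ nr ≤ (1 + ‖v‖) ^ max nq nr := pow_le_pow_right₀ hp (le_max_right _ _)
  calc |q v + r v| ≤ |q v| + |r v| := abs_add_le _ _
    _ ≤ Cq * (1 + ‖v‖) ^ nq + Cr * (1 + ‖v‖) ^ nr := add_le_add (hqb v) (hrb v)
    _ ≤ (Cq + Cr) * (1 + ‖v‖) ^ max nq nr := by nlinarith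
  
lemma PolyG.sub {q r : Ed d → ℝ} (hq : PolyG q) (hr : PolyG r) : PolyG (fun v => q v - r v) := by
  have := hq.add hr.neg
  simpa [sub_eq_add_neg] using this

lemma polyg_normsq : PolyG (fun v : Ed d => ‖v‖ ^ 2) := by
  refine ⟨(continuous_norm.pow 2), 1, 2, fun v => ?_⟩
  have h := norm_nonneg v
  show |‖v‖ ^ 2| ≤ 1 * (1 + ‖v‖) ^ 2
  rw [abs_of_nonneg (sq_nonneg _)]
  nlinarith

lemma polyg_sum {ι : Type*} (s : Finset ι) {q : ι → Ed d → ℝ} (hq : ∀ i ∈ s, PolyG (q i)) :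
    PolyG (fun v => ∑ i ∈ s, q i v) := by
  classical
  induction s using Finset.induction_on with
  | empty => simpa using polyg_const (d := d) 0
  | @insert a s' ha ih =>
      rw [show (fun v => ∑ i ∈ insert a s', q i v) = fun v => q a v + ∑ i ∈ s', q i v by
        funext v; rw [Finset.sum_insert ha]]
      exact (hq a (Finset.mem_insert_self a s')).add
        (ih fun i hi => hq i (Finset.mem_insert_of_mem hi))

lemma integrable_dom (hf : IsAdmissible f) {h : Ed d → ℝ} (hc : Continuous h)
    {C : ℝ} {n : ℕ} (hb : ∀ v, |h v| ≤ C * (1 + ‖v‖) ^ n * (f v + ‖fderiv ℝ f v‖)) :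
    Integrable h := by
  obtain ⟨C0, h0⟩ := hf.decay 0 (n + d + 1)
  obtain ⟨C1, h1⟩ := hf.decay 1 (n + d + 1)
  have hC0 : 0 ≤ C0 := le_trans (by positivity) (h0 0)
  have hC1 : 0 ≤ C1 := le_trans (by positivity) (h1 0)
  have hnC : 0 ≤ C := by
    have hb0 := hb 0
    have h2 : (0:ℝ) ≤ |h 0| := abs_nonneg _
    have h3 : (0:ℝ) < f 0 + ‖fderiv ℝ f 0‖ := by
      have := norm_nonneg (fderiv ℝ f 0); have := hf.pos 0; linarith
    have h4 : (0:ℝ) < (1 + ‖(0 : Ed d)‖) ^ n := pow_pos (one_add_norm_pos 0) n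
    nlinarith [mul_pos h4 h3]
  have key : ∀ v : Ed d, ‖h v‖ ≤ (C * (C0 + C1)) * (1 + ‖v‖) ^ (-(d + 1 : ℝ)) := by
    intro v
    have hp : (0:ℝ) < 1 + ‖v‖ := one_add_norm_pos v
    have hT : (0:ℝ) < (1 + ‖v‖) ^ (d + 1 : ℕ) := pow_pos hp _
    have hcast : ((1:ℝ) + ‖v‖) ^ (-(d + 1 : ℝ)) = ((1 + ‖v‖) ^ (d + 1 : ℕ))⁻¹ := by
      rw [Real.rpow_neg hp.le]
      congr 1
      rw [← Real.rpow_natCast (1 + ‖v‖) (d+1)]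
      push_cast
      ring_nf
    rw [hcast, Real.norm_eq_abs, ← div_eq_mul_inv, le_div_iff₀ hT]
    have hg0 : (0:ℝ) ≤ f v + ‖fderiv ℝ f v‖ := by
      have := norm_nonneg (fderiv ℝ f v); have := hf.pos v; linarith
    have hf0 : f v * (1 + ‖v‖) ^ (n + d + 1) ≤ C0 := by
      have := h0 v
      rwa [norm_iteratedFDeriv_zero, Real.norm_eq_abs, abs_of_pos (hf.pos v)] at this
    have hf1 : ‖fderiv ℝ f v‖ * (1 + ‖v‖) ^ (n + d + 1) ≤ C1 := by
      have h2 := h1 v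
      have h3 := norm_fderiv_le_it1 (f := f) v
      nlinarith [pow_pos hp (n + d + 1)]
    have e : (1 + ‖v‖) ^ n * (1 + ‖v‖) ^ (d + 1 : ℕ) = (1 + ‖v‖) ^ (n + d + 1) := by
      rw [← pow_add, Nat.add_assoc]
    calc |h v| * (1 + ‖v‖) ^ (d + 1 : ℕ)
        ≤ (C * (1 + ‖v‖) ^ n * (f v + ‖fderiv ℝ f v‖)) * (1 + ‖v‖) ^ (d + 1 : ℕ) :=
          mul_le_mul_of_nonneg_right (hb v) hT.le
      _ = C * ((f v + ‖fderiv ℝ f v‖) * ((1 + ‖v‖) ^ n * (1 + ‖v‖) ^ (d + 1 : ℕ))) := by ring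
      _ = C * ((f v + ‖fderiv ℝ f v‖) * (1 + ‖v‖) ^ (n + d + 1)) := by rw [e]
      _ ≤ C * (C0 + C1) := by
          have hbc : (f v + ‖fderiv ℝ f v‖) * (1 + ‖v‖) ^ (n + d + 1) ≤ C0 + C1 := by
            nlinarith
          exact mul_le_mul_of_nonneg_left hbc hnC
  have hint : Integrable (fun v : Ed d => (C * (C0 + C1)) * (1 + ‖v‖) ^ (-(d + 1 : ℝ))) :=
    (integrable_one_add_norm (E := Ed d) (μ := volume)
      (r := d + 1) (by simp [finrank_euclideanSpace])).const_mul _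
  exact hint.mono' hc.aestronglyMeasurable (Filter.Eventually.of_forall key)

lemma DomB.integrable (hf : IsAdmissible f) {h : Ed d → ℝ} (hh : DomB f h) : Integrable h := by
  obtain ⟨hc, C, n, hb⟩ := hh
  exact integrable_dom hf hc hb

lemma DomB.polyg_mul {q h : Ed d → ℝ} (hq : PolyG q) (hh : DomB f h) :
    DomB f (fun v => q v * h v) := by
  obtain ⟨hqc, Cq, nq, hqb⟩ := hq
  obtain ⟨hhc, Ch, nh, hhb⟩ := hh
  have hCq := PolyG.nonnegC Cq nq hqb
  refine ⟨hqc.mul hhc, Cq * Ch, nq + nh, fun v => ?_⟩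
  have hp := one_add_norm_pos v
  calc |q v * h v| = |q v| * |h v| := abs_mul _ _
    _ ≤ (Cq * (1 + ‖v‖) ^ nq) * (Ch * (1 + ‖v‖) ^ nh * (f v + ‖fderiv ℝ f v‖)) :=
        mul_le_mul (hqb v) (hhb v) (abs_nonneg _) (by positivity)
    _ = Cq * Ch * (1 + ‖v‖) ^ (nq + nh) * (f v + ‖fderiv ℝ f v‖) := by rw [pow_add]; ring

lemma domb_f (hf : IsAdmissible f) : DomB f f := by
  refine ⟨hf.smooth.continuous, 1, 0, fun v => ?_⟩
  have := (hf.pos v).le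
  have := norm_nonneg (fderiv ℝ f v)
  rw [abs_of_pos (hf.pos v)]
  simp only [pow_zero, mul_one, one_mul]
  linarith

lemma domb_Df (hf : IsAdmissible f) (j : Fin d) :
    DomB f (fun v => fderiv ℝ f v (EuclideanSpace.single j 1)) := by
  refine ⟨cont_Df hf j, 1, 0, fun v => ?_⟩
  have h1 := abs_Df_le (f := f) v j
  have := (hf.pos v).le
  simp only [pow_zero, mul_one, one_mul]
  linarith

lemma domb_G (hf : IsAdmissible f) (i j : Fin d) :
    DomB f (fun v => pgradLog f v i * pgradLog f v j * f v) := by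
  obtain ⟨Cg, kg, hg⟩ := hf.gradLog_poly
  have hCg : 0 ≤ Cg := by
    have h := hg 0
    have := norm_nonneg (fderiv ℝ (fun y => Real.log (f y)) 0)
    simp only [norm_zero, add_zero, one_pow, mul_one] at h
    linarith
  refine ⟨((cont_g hf i).mul (cont_g hf j)).mul hf.smooth.continuous, Cg, kg, fun v => ?_⟩
  show |pgradLog f v i * pgradLog f v j * f v| ≤ _
  have e1 : pgradLog f v i * pgradLog f v j * f v
      = pgradLog f v i * fderiv ℝ f v (EuclideanSpace.single j 1) := by
    rw [mul_assoc, pgradLog_mul hf]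
  rw [e1, abs_mul]
  have h2 : |pgradLog f v i| ≤ Cg * (1 + ‖v‖) ^ kg := by
    calc |pgradLog f v i| ≤ ‖fderiv ℝ (fun x => Real.log (f x)) v‖ := by
          rw [pgradLog]
          calc |fderiv ℝ (fun x => Real.log (f x)) v (EuclideanSpace.single i 1)|
              ≤ ‖fderiv ℝ (fun x => Real.log (f x)) v‖ * ‖EuclideanSpace.single i (1:ℝ)‖ :=
                (fderiv ℝ (fun x => Real.log (f x)) v).le_opNorm _
            _ = ‖fderiv ℝ (fun x => Real.log (f x)) v‖ := by rw [EuclideanSpace.norm_single]; simp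
      _ ≤ Cg * (1 + ‖v‖) ^ kg := hg v
  have h3 : |fderiv ℝ f v (EuclideanSpace.single j 1)| ≤ f v + ‖fderiv ℝ f v‖ := by
    have := abs_Df_le (f := f) v j
    have := (hf.pos v).le
    linarith
  calc |pgradLog f v i| * |fderiv ℝ f v (EuclideanSpace.single j 1)|
      ≤ (Cg * (1 + ‖v‖) ^ kg) * (f v + ‖fderiv ℝ f v‖) :=
        mul_le_mul h2 h3 (abs_nonneg _) (by positivity)
    _ = Cg * (1 + ‖v‖) ^ kg * (f v + ‖fderiv ℝ f v‖) := by ring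

end EProof

namespace EProof

variable {d : ℕ} {f : Ed d → ℝ}

lemma int_poly_f (hf : IsAdmissible f) {q : Ed d → ℝ} (hq : PolyG q) :
    Integrable (fun v => q v * f v) :=
  ((domb_f hf).polyg_mul hq).integrable hf

lemma int_poly_Df (hf : IsAdmissible f) {q : Ed d → ℝ} (hq : PolyG q) (j : Fin d) :
    Integrable (fun v => q v * fderiv ℝ f v (EuclideanSpace.single j 1)) :=
  ((domb_Df hf j).polyg_mul hq).integrable hf

lemma int_poly_G (hf : IsAdmissible f) {q : Ed d → ℝ} (hq : PolyG q) (i j : Fin d) :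
    Integrable (fun v => q v * (pgradLog f v i * pgradLog f v j * f v)) :=
  ((domb_G hf i j).polyg_mul hq).integrable hf

lemma ibp (hf : IsAdmissible f) {q : Ed d → ℝ} (hqd : Differentiable ℝ q) (hq : PolyG q)
    (j : Fin d) (hq' : PolyG (fun v => fderiv ℝ q v (EuclideanSpace.single j 1))) :
    ∫ v, q v * fderiv ℝ f v (EuclideanSpace.single j 1)
      = - ∫ v, fderiv ℝ q v (EuclideanSpace.single j 1) * f v := by
  exact integral_mul_fderiv_eq_neg_fderiv_mul_of_integrable
    (int_poly_f hf hq')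
    (int_poly_Df hf hq j)
    (int_poly_f hf hq)
    (fun x _ => hqd x) (fun x _ => hfd hf x)

/-- `∫ ∂_j f = 0`. -/
lemma int_Df (hf : IsAdmissible f) (j : Fin d) : ∫ v, fderiv ℝ f v (EuclideanSpace.single j 1) = 0 := by
  have h := ibp hf (differentiable_const (1:ℝ)) (polyg_const 1) j
    (by simpa [fderiv_const] using polyg_const (d := d) 0)
  simpa [fderiv_const] using h

/-- `∫ v_k ∂_j f = -δ_{kj}`. -/
lemma int_coord_Df (hf : IsAdmissible f) (hmass : ∫ v : Ed d, f v = 1) (k j : Fin d) :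
    ∫ v, v k * fderiv ℝ f v (EuclideanSpace.single j 1)
      = -(if k = j then (1:ℝ) else 0) := by
  have hder : ∀ v : Ed d, fderiv ℝ (fun y : Ed d => y k) v (EuclideanSpace.single j 1)
      = (if k = j then (1:ℝ) else 0) := by
    intro v
    rw [fderiv_coord, EuclideanSpace.single_apply]
  have h := ibp hf (differentiable_coord k) (polyg_coord k) j
    (by
      rw [show (fun v : Ed d => fderiv ℝ (fun y : Ed d => y k) v (EuclideanSpace.single j 1))
          = fun _ => (if k = j then (1:ℝ) else 0) from funext hder]
      exact polyg_const _)
  rw [h]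
  rw [show (fun v : Ed d => fderiv ℝ (fun y : Ed d => y k) v (EuclideanSpace.single j 1) * f v)
      = fun v => (if k = j then (1:ℝ) else 0) * f v by funext v; rw [hder]]
  rw [integral_const_mul, hmass, mul_one]

/-- `∫ v_k v_l ∂_j f = 0`. -/
lemma int_coord2_Df (hf : IsAdmissible f) (hmom : ∀ i, ∫ v : Ed d, v i * f v = 0)
    (k l j : Fin d) :
    ∫ v, (v k * v l) * fderiv ℝ f v (EuclideanSpace.single j 1) = 0 := by
  have hder : ∀ v : Ed d, fderiv ℝ (fun y : Ed d => y k * y l) v (EuclideanSpace.single j 1)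
      = (if l = j then (1:ℝ) else 0) * v k + (if k = j then (1:ℝ) else 0) * v l := by
    intro v
    rw [fderiv_fun_mul ((differentiable_coord k) v) ((differentiable_coord l) v)]
    simp only [ContinuousLinearMap.add_apply, ContinuousLinearMap.coe_smul', Pi.smul_apply,
      smul_eq_mul]
    rw [fderiv_coord, fderiv_coord, EuclideanSpace.single_apply, EuclideanSpace.single_apply]
    ring
  have h := ibp hf (q := fun y : Ed d => y k * y l) ((differentiable_coord k).mul (differentiable_coord l))
    ((polyg_coord k).mul (polyg_coord l)) j
    (by
      rw [funext hder]
      exact ((polyg_const _).mul (polyg_coord k)).add ((polyg_const _).mul (polyg_coord l)))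
  rw [h, funext (fun v => by rw [hder v] : ∀ v : Ed d,
      (fderiv ℝ (fun y : Ed d => y k * y l) v (EuclideanSpace.single j 1) * f v)
      = ((if l = j then (1:ℝ) else 0) * v k + (if k = j then (1:ℝ) else 0) * v l) * f v)]
  rw [show (fun v : Ed d =>
      ((if l = j then (1:ℝ) else 0) * v k + (if k = j then (1:ℝ) else 0) * v l) * f v)
      = fun v : Ed d => (if l = j then (1:ℝ) else 0) * (v k * f v)
        + (if k = j then (1:ℝ) else 0) * (v l * f v) by funext v; ring]
  rw [integral_add (((int_poly_f hf (polyg_coord k)).const_mul _))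
      ((int_poly_f hf (polyg_coord l)).const_mul _),
    integral_const_mul, integral_const_mul, hmom, hmom]
  ring

lemma int_coord2_f (k l : Fin d) : ∫ v, v k * v l * f v = temperature f k l := rfl

lemma trace_T (hf : IsAdmissible f) (henergy : ∫ v : Ed d, ‖v‖ ^ 2 * f v = d) :
    ∑ k, temperature f k k = (d : ℝ) := by
  have h1 : ∑ k, temperature f k k = ∑ k : Fin d, ∫ v, v k * v k * f v := rfl
  rw [h1, ← integral_finset_sum Finset.univ
    (fun k _ => int_poly_f hf ((polyg_coord k).mul (polyg_coord k)))]
  rw [← henergy]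
  congr 1
  funext v
  rw [norm_sq_eq, Finset.sum_mul]
  congr 1; funext k; ring

end EProof

namespace EProof

variable {d : ℕ} {f : Ed d → ℝ}

lemma int3 {d : ℕ} {A B C : Ed d → ℝ} (hA : Integrable A) (hB : Integrable B)
    (hC : Integrable C) :
    ∫ w, (A w - B w + C w) = (∫ w, A w) - (∫ w, B w) + ∫ w, C w := by
  have hAB : Integrable (fun w => A w - B w) := hA.sub hB
  rw [show (fun w => A w - B w + C w) = fun w => (fun w => A w - B w) w + C w from rfl,
    integral_add hAB hC]
  congr 1
  exact integral_sub hA hB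

lemma int4 {d : ℕ} {A B C D : Ed d → ℝ} (hA : Integrable A) (hB : Integrable B)
    (hC : Integrable C) (hD : Integrable D) :
    ∫ w, (A w - B w - C w + D w)
      = (∫ w, A w) - (∫ w, B w) - (∫ w, C w) + ∫ w, D w := by
  have hABC : Integrable (fun w => A w - B w - C w) := (hA.sub hB).sub hC
  rw [show (fun w => A w - B w - C w + D w) = fun w => (fun w => A w - B w - C w) w + D w from rfl,
    integral_add hABC hD]
  congr 1
  have hAB : Integrable (fun w => A w - B w) := hA.sub hB
  rw [show (fun w => A w - B w - C w) = fun w => (fun w => A w - B w) w - C w from rfl,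
    integral_sub hAB hC]
  congr 1
  exact integral_sub hA hB

lemma matA_expand (v w : Ed d) (i j : Fin d) (c : ℝ) :
    matA (v - w) i j * c
      = (if i = j then (1:ℝ) else 0)
          * (∑ k, (v k ^ 2 * c - 2 * v k * (w k * c) + w k * w k * c))
        - ((v i * v j) * c - v i * (w j * c) - v j * (w i * c) + w i * w j * c) := by
  have hsub : ∀ k : Fin d, (v - w) k = v k - w k := fun k => rfl
  have h2 : (∑ k, (v k - w k) ^ 2) * c
      = ∑ k, (v k ^ 2 * c - 2 * v k * (w k * c) + w k * w k * c) := by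
    rw [Finset.sum_mul]
    exact Finset.sum_congr rfl fun k _ => by ring
  calc matA (v - w) i j * c
      = (if i = j then (1:ℝ) else 0) * ((∑ k, (v k - w k) ^ 2) * c)
        - (v i - w i) * (v j - w j) * c := by
        simp only [matA, Matrix.of_apply, norm_sq_eq, hsub]
        ring
    _ = _ := by
        rw [h2]
        congr 1
        ring

lemma Wcalc (hf : IsAdmissible f) (hmass : ∫ v : Ed d, f v = 1)
    (hmom : ∀ i, ∫ v : Ed d, v i * f v = 0)
    (henergy : ∫ v : Ed d, ‖v‖ ^ 2 * f v = d)
    (v : Ed d) (i j : Fin d) :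
    ∫ w, matA (v - w) i j * f w = kmat (temperature f) v i j := by
  have hpsi : ∀ k : Fin d,
      Integrable (fun w : Ed d => v k ^ 2 * f w - 2 * v k * (w k * f w) + w k * w k * f w) := by
    intro k
    refine Integrable.add (Integrable.sub ?_ ?_) ?_
    · exact (int_poly_f hf (polyg_const (v k ^ 2)) : Integrable fun w : Ed d => v k ^ 2 * f w)
    · exact ((int_poly_f hf (polyg_coord k)).const_mul (2 * v k))
    · exact (int_poly_f hf ((polyg_coord k).mul (polyg_coord k))
        : Integrable fun w : Ed d => (w k * w k) * f w)
  have hS : Integrable (fun w : Ed d =>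
      ∑ k, (v k ^ 2 * f w - 2 * v k * (w k * f w) + w k * w k * f w)) :=
    integrable_finset_sum _ fun k _ => hpsi k
  have hR : Integrable (fun w : Ed d =>
      (v i * v j) * f w - v i * (w j * f w) - v j * (w i * f w) + w i * w j * f w) := by
    refine Integrable.add (Integrable.sub (Integrable.sub ?_ ?_) ?_) ?_
    · exact (int_poly_f hf (polyg_const (v i * v j)))
    · exact ((int_poly_f hf (polyg_coord j)).const_mul (v i))
    · exact ((int_poly_f hf (polyg_coord i)).const_mul (v j))
    · exact (int_poly_f hf ((polyg_coord i).mul (polyg_coord j))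
        : Integrable fun w : Ed d => (w i * w j) * f w)
  rw [show (fun w : Ed d => matA (v - w) i j * f w)
      = fun w : Ed d => (if i = j then (1:ℝ) else 0)
          * (∑ k, (v k ^ 2 * f w - 2 * v k * (w k * f w) + w k * w k * f w))
        - ((v i * v j) * f w - v i * (w j * f w) - v j * (w i * f w) + w i * w j * f w)
      from funext fun w => matA_expand v w i j (f w)]
  rw [integral_sub (hS.const_mul _) hR, integral_const_mul]
  have hSval : ∫ w : Ed d, ∑ k, (v k ^ 2 * f w - 2 * v k * (w k * f w) + w k * w k * f w)
      = ‖v‖ ^ 2 + d := by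
    rw [integral_finset_sum _ fun k _ => hpsi k]
    have hterm : ∀ k : Fin d,
        ∫ w : Ed d, (v k ^ 2 * f w - 2 * v k * (w k * f w) + w k * w k * f w)
          = v k ^ 2 + temperature f k k := by
      intro k
      have e : ∫ w : Ed d, (v k ^ 2 * f w - 2 * v k * (w k * f w) + w k * w k * f w)
          = (∫ w : Ed d, v k ^ 2 * f w) - (∫ w : Ed d, 2 * v k * (w k * f w))
            + ∫ w : Ed d, w k * w k * f w :=
        int3 (int_poly_f hf (polyg_const (v k ^ 2)))
          ((int_poly_f hf (polyg_coord k)).const_mul (2 * v k))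
          (int_poly_f hf ((polyg_coord k).mul (polyg_coord k)))
      rw [e, integral_const_mul, integral_const_mul, hmass, hmom k, int_coord2_f]
      ring
    rw [Finset.sum_congr rfl fun k _ => hterm k, Finset.sum_add_distrib,
      trace_T hf henergy, norm_sq_eq]
  have hRval : ∫ w : Ed d,
      ((v i * v j) * f w - v i * (w j * f w) - v j * (w i * f w) + w i * w j * f w)
        = v i * v j + temperature f i j := by
    have e : ∫ w : Ed d,
        ((v i * v j) * f w - v i * (w j * f w) - v j * (w i * f w) + w i * w j * f w)
        = (∫ w : Ed d, (v i * v j) * f w) - (∫ w : Ed d, v i * (w j * f w))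
          - (∫ w : Ed d, v j * (w i * f w)) + ∫ w : Ed d, w i * w j * f w :=
      int4 (int_poly_f hf (polyg_const (v i * v j)))
        ((int_poly_f hf (polyg_coord j)).const_mul (v i))
        ((int_poly_f hf (polyg_coord i)).const_mul (v j))
        (int_poly_f hf ((polyg_coord i).mul (polyg_coord j)))
    rw [e, integral_const_mul, integral_const_mul, integral_const_mul,
      hmass, hmom i, hmom j, int_coord2_f]
    ring
  rw [hSval, hRval]
  simp only [kmat, Matrix.sub_apply, Matrix.add_apply, Matrix.smul_apply, Matrix.one_apply,
    matA, Matrix.of_apply, smul_eq_mul]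
  ring

lemma Ycalc (hf : IsAdmissible f) (hmass : ∫ v : Ed d, f v = 1)
    (hmom : ∀ i, ∫ v : Ed d, v i * f v = 0)
    (v : Ed d) (i j : Fin d) :
    ∫ w, matA (v - w) i j * fderiv ℝ f w (EuclideanSpace.single j 1)
      = (if i = j then (1:ℝ) else 0) * v j - v i := by
  set b : Ed d → ℝ := fun w => fderiv ℝ f w (EuclideanSpace.single j 1) with hb
  have hpsi : ∀ k : Fin d,
      Integrable (fun w : Ed d => v k ^ 2 * b w - 2 * v k * (w k * b w) + w k * w k * b w) := by
    intro k
    refine Integrable.add (Integrable.sub ?_ ?_) ?_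
    · exact (int_poly_Df hf (polyg_const (v k ^ 2)) j)
    · exact ((int_poly_Df hf (polyg_coord k) j).const_mul (2 * v k))
    · exact (int_poly_Df hf ((polyg_coord k).mul (polyg_coord k)) j)
  have hS : Integrable (fun w : Ed d =>
      ∑ k, (v k ^ 2 * b w - 2 * v k * (w k * b w) + w k * w k * b w)) :=
    integrable_finset_sum _ fun k _ => hpsi k
  have hR : Integrable (fun w : Ed d =>
      (v i * v j) * b w - v i * (w j * b w) - v j * (w i * b w) + w i * w j * b w) := by
    refine Integrable.add (Integrable.sub (Integrable.sub ?_ ?_) ?_) ?_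
    · exact (int_poly_Df hf (polyg_const (v i * v j)) j)
    · exact ((int_poly_Df hf (polyg_coord j) j).const_mul (v i))
    · exact ((int_poly_Df hf (polyg_coord i) j).const_mul (v j))
    · exact (int_poly_Df hf ((polyg_coord i).mul (polyg_coord j)) j)
  rw [show (fun w : Ed d => matA (v - w) i j * b w)
      = fun w : Ed d => (if i = j then (1:ℝ) else 0)
          * (∑ k, (v k ^ 2 * b w - 2 * v k * (w k * b w) + w k * w k * b w))
        - ((v i * v j) * b w - v i * (w j * b w) - v j * (w i * b w) + w i * w j * b w)
      from funext fun w => matA_expand v w i j (b w)]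
  rw [integral_sub (hS.const_mul _) hR, integral_const_mul]
  have hSval : ∫ w : Ed d, ∑ k, (v k ^ 2 * b w - 2 * v k * (w k * b w) + w k * w k * b w)
      = 2 * v j := by
    rw [integral_finset_sum _ fun k _ => hpsi k]
    have hterm : ∀ k : Fin d,
        ∫ w : Ed d, (v k ^ 2 * b w - 2 * v k * (w k * b w) + w k * w k * b w)
          = 2 * v k * (if k = j then (1:ℝ) else 0) := by
      intro k
      have e : ∫ w : Ed d, (v k ^ 2 * b w - 2 * v k * (w k * b w) + w k * w k * b w)
          = (∫ w : Ed d, v k ^ 2 * b w) - (∫ w : Ed d, 2 * v k * (w k * b w))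
            + ∫ w : Ed d, w k * w k * b w :=
        int3 (int_poly_Df hf (polyg_const (v k ^ 2)) j)
          ((int_poly_Df hf (polyg_coord k) j).const_mul (2 * v k))
          (int_poly_Df hf ((polyg_coord k).mul (polyg_coord k)) j)
      rw [e, integral_const_mul, integral_const_mul]
      rw [show (∫ w : Ed d, b w) = 0 from int_Df hf j,
        show (∫ w : Ed d, w k * b w) = -(if k = j then (1:ℝ) else 0) from int_coord_Df hf hmass k j,
        show (∫ w : Ed d, w k * w k * b w) = 0 from int_coord2_Df hf hmom k k j]
      ring
    rw [Finset.sum_congr rfl fun k _ => hterm k]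
    rw [Finset.sum_eq_single j (fun k _ hkj => by simp [hkj]) (by simp)]
    simp
  have hRval : ∫ w : Ed d,
      ((v i * v j) * b w - v i * (w j * b w) - v j * (w i * b w) + w i * w j * b w)
        = v i + v j * (if i = j then (1:ℝ) else 0) := by
    have e : ∫ w : Ed d,
        ((v i * v j) * b w - v i * (w j * b w) - v j * (w i * b w) + w i * w j * b w)
        = (∫ w : Ed d, (v i * v j) * b w) - (∫ w : Ed d, v i * (w j * b w))
          - (∫ w : Ed d, v j * (w i * b w)) + ∫ w : Ed d, w i * w j * b w :=
      int4 (int_poly_Df hf (polyg_const (v i * v j)) j)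
        ((int_poly_Df hf (polyg_coord j) j).const_mul (v i))
        ((int_poly_Df hf (polyg_coord i) j).const_mul (v j))
        (int_poly_Df hf ((polyg_coord i).mul (polyg_coord j)) j)
    rw [e, integral_const_mul, integral_const_mul, integral_const_mul]
    rw [show (∫ w : Ed d, b w) = 0 from int_Df hf j,
      show (∫ w : Ed d, w j * b w) = -(if j = j then (1:ℝ) else 0) from int_coord_Df hf hmass j j,
      show (∫ w : Ed d, w i * b w) = -(if i = j then (1:ℝ) else 0) from int_coord_Df hf hmass i j,
      show (∫ w : Ed d, w i * w j * b w) = 0 from int_coord2_Df hf hmom i j j]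
    norm_num
  rw [hSval, hRval]
  by_cases hij : i = j <;> simp [hij] <;> ring

end EProof

namespace EProof

variable {d : ℕ} {f : Ed d → ℝ}

lemma domb_abs {h : Ed d → ℝ} (H : DomB f h) : DomB f (fun v => |h v|) := by
  obtain ⟨hc, C, n, hb⟩ := H
  exact ⟨hc.abs, C, n, fun v => by rw [abs_abs]; exact hb v⟩

lemma polyg_one_add2 : PolyG (fun v : Ed d => (1 + ‖v‖) ^ 2) := by
  refine ⟨(continuous_const.add continuous_norm).pow 2, 1, 2, fun v => ?_⟩
  rw [abs_of_nonneg (by positivity), one_mul]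

lemma prod_integrable (hf : IsAdmissible f) {h1 h2 : Ed d → ℝ}
    (H1 : DomB f h1) (H2 : DomB f h2) :
    Integrable (fun p : Ed d × Ed d => h1 p.1 * h2 p.2) := by
  exact (H1.integrable hf).mul_prod (H2.integrable hf)

lemma cont_matA (i j : Fin d) : Continuous (fun p : Ed d × Ed d => matA (p.1 - p.2) i j) := by
  have hc : ∀ k : Fin d, Continuous fun p : Ed d × Ed d => (p.1 - p.2) k := fun k =>
    (EuclideanSpace.proj (𝕜 := ℝ) k).continuous.comp (continuous_fst.sub continuous_snd)
  show Continuous fun p : Ed d × Ed d =>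
    ‖p.1 - p.2‖ ^ 2 * (if i = j then (1:ℝ) else 0) - (p.1 - p.2) i * (p.1 - p.2) j
  exact ((((continuous_fst.sub continuous_snd).norm.pow 2).mul continuous_const)).sub
    ((hc i).mul (hc j))

lemma matA_abs_le (z : Ed d) (i j : Fin d) : |matA z i j| ≤ 2 * ‖z‖ ^ 2 := by
  have h1 := coord_abs_le z i
  have h2 := coord_abs_le z j
  have hzz : |z i * z j| ≤ ‖z‖ ^ 2 := by
    rw [abs_mul]
    calc |z i| * |z j| ≤ ‖z‖ * ‖z‖ :=
          mul_le_mul h1 h2 (abs_nonneg _) (norm_nonneg _)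
      _ = ‖z‖ ^ 2 := (sq ‖z‖).symm
  have h3 := abs_le.mp hzz
  have : matA z i j = ‖z‖ ^ 2 * (if i = j then (1:ℝ) else 0) - z i * z j := rfl
  rw [this, abs_le]
  constructor <;> split_ifs <;> nlinarith [sq_nonneg ‖z‖]

lemma norm_sub_sq_le (p : Ed d × Ed d) :
    ‖p.1 - p.2‖ ^ 2 ≤ (1 + ‖p.1‖) ^ 2 * (1 + ‖p.2‖) ^ 2 := by
  have h := norm_sub_le p.1 p.2
  have h2 : ‖p.1 - p.2‖ ^ 2 ≤ (‖p.1‖ + ‖p.2‖) ^ 2 := by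
    nlinarith [norm_nonneg (p.1 - p.2)]
  have ha := norm_nonneg p.1
  have hb := norm_nonneg p.2
  nlinarith [mul_nonneg ha hb, sq_nonneg (‖p.1‖ + ‖p.2‖), sq_nonneg (‖p.1‖ * ‖p.2‖),
    mul_nonneg (mul_nonneg ha hb) ha, mul_nonneg (mul_nonneg ha hb) hb,
    mul_nonneg (mul_nonneg (mul_nonneg ha hb) ha) hb]

lemma t_integrable (hf : IsAdmissible f) {h1 h2 : Ed d → ℝ}
    (H1 : DomB f h1) (H2 : DomB f h2) (i j : Fin d) :
    Integrable (fun p : Ed d × Ed d => matA (p.1 - p.2) i j * (h1 p.1 * h2 p.2)) := by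
  have hb1 : DomB f (fun v => (2 * (1 + ‖v‖) ^ 2) * |h1 v|) :=
    (domb_abs H1).polyg_mul ((polyg_const 2).mul polyg_one_add2)
  have hb2 : DomB f (fun v => (1 + ‖v‖) ^ 2 * |h2 v|) :=
    (domb_abs H2).polyg_mul polyg_one_add2
  apply (prod_integrable hf hb1 hb2).mono'
  · exact ((cont_matA i j).mul
      ((H1.1.comp continuous_fst).mul (H2.1.comp continuous_snd))).aestronglyMeasurable
  · apply Filter.Eventually.of_forall
    intro p
    rw [Real.norm_eq_abs, abs_mul, abs_mul]
    calc |matA (p.1 - p.2) i j| * (|h1 p.1| * |h2 p.2|)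
        ≤ (2 * ‖p.1 - p.2‖ ^ 2) * (|h1 p.1| * |h2 p.2|) :=
          mul_le_mul_of_nonneg_right (matA_abs_le _ i j) (by positivity)
      _ ≤ (2 * ((1 + ‖p.1‖) ^ 2 * (1 + ‖p.2‖) ^ 2)) * (|h1 p.1| * |h2 p.2|) := by
          have := norm_sub_sq_le p
          have h0 : (0:ℝ) ≤ |h1 p.1| * |h2 p.2| := by positivity
          nlinarith
      _ = (2 * (1 + ‖p.1‖) ^ 2) * |h1 p.1| * ((1 + ‖p.2‖) ^ 2 * |h2 p.2|) := by ring

lemma fub_W (hf : IsAdmissible f) (hmass : ∫ v : Ed d, f v = 1)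
    (hmom : ∀ i, ∫ v : Ed d, v i * f v = 0)
    (henergy : ∫ v : Ed d, ‖v‖ ^ 2 * f v = d)
    {g1 : Ed d → ℝ} (H1 : DomB f g1) (i j : Fin d) :
    ∫ p : Ed d × Ed d, matA (p.1 - p.2) i j * (g1 p.1 * f p.2)
      = ∫ v, g1 v * kmat (temperature f) v i j := by
  have hI : Integrable (Function.uncurry fun v w : Ed d => matA (v - w) i j * (g1 v * f w))
      (volume.prod volume) := t_integrable hf H1 (domb_f hf) i j
  have heq : ∫ p : Ed d × Ed d, matA (p.1 - p.2) i j * (g1 p.1 * f p.2)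
      = ∫ v : Ed d, ∫ w : Ed d, matA (v - w) i j * (g1 v * f w) :=
    (integral_integral hI).symm
  rw [heq]
  apply integral_congr_ae
  apply Filter.Eventually.of_forall
  intro v
  show (∫ w : Ed d, matA (v - w) i j * (g1 v * f w)) = g1 v * kmat (temperature f) v i j
  have e1 : (fun w : Ed d => matA (v - w) i j * (g1 v * f w))
      = fun w : Ed d => g1 v * (matA (v - w) i j * f w) := funext fun w => by ring
  rw [e1, integral_const_mul, Wcalc hf hmass hmom henergy v i j]

lemma cross_val (hf : IsAdmissible f) (hmass : ∫ v : Ed d, f v = 1)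
    (hmom : ∀ i, ∫ v : Ed d, v i * f v = 0) (i j : Fin d) :
    ∫ p : Ed d × Ed d, matA (p.1 - p.2) i j *
        (fderiv ℝ f p.1 (EuclideanSpace.single i 1) * fderiv ℝ f p.2 (EuclideanSpace.single j 1))
      = 1 - (if i = j then (1:ℝ) else 0) := by
  have hI : Integrable (Function.uncurry fun v w : Ed d => matA (v - w) i j *
        (fderiv ℝ f v (EuclideanSpace.single i 1) * fderiv ℝ f w (EuclideanSpace.single j 1)))
      (volume.prod volume) := t_integrable hf (domb_Df hf i) (domb_Df hf j) i j
  have heq : ∫ p : Ed d × Ed d, matA (p.1 - p.2) i j *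
        (fderiv ℝ f p.1 (EuclideanSpace.single i 1) * fderiv ℝ f p.2 (EuclideanSpace.single j 1))
      = ∫ v : Ed d, ∫ w : Ed d, matA (v - w) i j *
        (fderiv ℝ f v (EuclideanSpace.single i 1) * fderiv ℝ f w (EuclideanSpace.single j 1)) :=
    (integral_integral hI).symm
  rw [heq]
  have hinner : ∀ v : Ed d, ∫ w : Ed d, matA (v - w) i j *
        (fderiv ℝ f v (EuclideanSpace.single i 1) * fderiv ℝ f w (EuclideanSpace.single j 1))
      = (if i = j then (1:ℝ) else 0) * (v j * fderiv ℝ f v (EuclideanSpace.single i 1))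
        - v i * fderiv ℝ f v (EuclideanSpace.single i 1) := by
    intro v
    have e1 : (fun w : Ed d => matA (v - w) i j *
        (fderiv ℝ f v (EuclideanSpace.single i 1) * fderiv ℝ f w (EuclideanSpace.single j 1)))
        = fun w : Ed d => fderiv ℝ f v (EuclideanSpace.single i 1) *
            (matA (v - w) i j * fderiv ℝ f w (EuclideanSpace.single j 1)) :=
      funext fun w => by ring
    rw [e1, integral_const_mul, Ycalc hf hmass hmom v i j]
    ring
  rw [integral_congr_ae (Filter.Eventually.of_forall hinner)]
  have hIa : Integrable (fun v : Ed d =>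
      v j * fderiv ℝ f v (EuclideanSpace.single i 1)) := int_poly_Df hf (polyg_coord j) i
  have hIb : Integrable (fun v : Ed d =>
      v i * fderiv ℝ f v (EuclideanSpace.single i 1)) := int_poly_Df hf (polyg_coord i) i
  have hsub : ∫ v : Ed d, ((if i = j then (1:ℝ) else 0)
        * (v j * fderiv ℝ f v (EuclideanSpace.single i 1))
      - v i * fderiv ℝ f v (EuclideanSpace.single i 1))
      = (∫ v : Ed d, (if i = j then (1:ℝ) else 0)
          * (v j * fderiv ℝ f v (EuclideanSpace.single i 1)))
        - ∫ v : Ed d, v i * fderiv ℝ f v (EuclideanSpace.single i 1) :=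
    integral_sub (hIa.const_mul _) hIb
  rw [hsub, integral_const_mul, int_coord_Df hf hmass j i, int_coord_Df hf hmass i i]
  by_cases hij : i = j <;> simp [hij]

lemma matA_symm (z : Ed d) (i j : Fin d) : matA z i j = matA z j i := by
  by_cases h : i = j
  · rw [h]
  · show ‖z‖ ^ 2 * (if i = j then (1:ℝ) else 0) - z i * z j
      = ‖z‖ ^ 2 * (if j = i then (1:ℝ) else 0) - z j * z i
    rw [if_neg h, if_neg (Ne.symm h)]
    ring

lemma matA_neg (z : Ed d) (i j : Fin d) : matA (-z) i j = matA z i j := by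
  show ‖-z‖ ^ 2 * (if i = j then (1:ℝ) else 0) - (-z) i * (-z) j
    = ‖z‖ ^ 2 * (if i = j then (1:ℝ) else 0) - z i * z j
  have h1 : (-z) i = -(z i) := rfl
  have h2 : (-z) j = -(z j) := rfl
  rw [norm_neg, h1, h2]
  ring

end EProof

namespace EProof

variable {d : ℕ} {f : Ed d → ℝ}

def S1 (f : Ed d → ℝ) (p : Ed d × Ed d) : ℝ :=
  ∑ i, ∑ j, matA (p.1 - p.2) i j * ((pgradLog f p.1 i * pgradLog f p.1 j * f p.1) * f p.2)

def S2 (f : Ed d → ℝ) (p : Ed d × Ed d) : ℝ :=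
  ∑ i, ∑ j, matA (p.1 - p.2) i j * (f p.1 * (pgradLog f p.2 i * pgradLog f p.2 j * f p.2))

def S3 (f : Ed d → ℝ) (p : Ed d × Ed d) : ℝ :=
  ∑ i, ∑ j, matA (p.1 - p.2) i j *
    (fderiv ℝ f p.1 (EuclideanSpace.single i 1) * fderiv ℝ f p.2 (EuclideanSpace.single j 1))

lemma DomB.mul_polyg {q h : Ed d → ℝ} (hh : DomB f h) (hq : PolyG q) :
    DomB f (fun v => h v * q v) := by
  have := hh.polyg_mul hq
  obtain ⟨hc, C, n, hb⟩ := this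
  exact ⟨hh.1.mul hq.1, C, n, fun v => by
    show |h v * q v| ≤ _
    rw [mul_comm (h v) (q v)]; exact hb v⟩

lemma polyg_kmat (T : Matrix (Fin d) (Fin d) ℝ) (i j : Fin d) :
    PolyG (fun v : Ed d => kmat T v i j) := by
  have he : (fun v : Ed d => kmat T v i j)
      = fun v : Ed d => ‖v‖ ^ 2 * (if i = j then (1:ℝ) else 0) - v i * v j
          + ((d : ℝ) * (if i = j then (1:ℝ) else 0) - T i j) := by
    funext v
    simp only [kmat, Matrix.sub_apply, Matrix.add_apply, Matrix.smul_apply, Matrix.one_apply,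
      matA, Matrix.of_apply, smul_eq_mul]
    ring
  rw [he]
  exact ((polyg_normsq.mul (polyg_const _)).sub ((polyg_coord i).mul (polyg_coord j))).add
    (polyg_const _)

lemma pointwise_expand (hf : IsAdmissible f) (p : Ed d × Ed d) :
    qf (matA (p.1 - p.2)) (fun i => pgradLog f p.1 i - pgradLog f p.2 i) * (f p.1 * f p.2)
      = S1 f p + S2 f p - 2 * S3 f p := by
  have swap2 : ∑ i, ∑ j, matA (p.1 - p.2) i j *
        (pgradLog f p.1 j * pgradLog f p.2 i * (f p.1 * f p.2))
      = ∑ i, ∑ j, matA (p.1 - p.2) i j *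
        (pgradLog f p.1 i * pgradLog f p.2 j * (f p.1 * f p.2)) := by
    rw [Finset.sum_comm]
    exact Finset.sum_congr rfl fun i _ => Finset.sum_congr rfl fun j _ => by rw [matA_symm]
  have step1 : qf (matA (p.1 - p.2)) (fun i => pgradLog f p.1 i - pgradLog f p.2 i)
        * (f p.1 * f p.2)
      = ∑ i, ∑ j, (matA (p.1 - p.2) i j *
            (pgradLog f p.1 i * pgradLog f p.1 j * (f p.1 * f p.2))
          + matA (p.1 - p.2) i j * (pgradLog f p.2 i * pgradLog f p.2 j * (f p.1 * f p.2))
          - matA (p.1 - p.2) i j * (pgradLog f p.1 i * pgradLog f p.2 j * (f p.1 * f p.2))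
          - matA (p.1 - p.2) i j * (pgradLog f p.1 j * pgradLog f p.2 i * (f p.1 * f p.2))) := by
    rw [qf, Finset.sum_mul]
    refine Finset.sum_congr rfl fun i _ => ?_
    rw [Finset.sum_mul]
    exact Finset.sum_congr rfl fun j _ => by ring
  rw [step1]
  simp only [Finset.sum_sub_distrib, Finset.sum_add_distrib]
  rw [swap2]
  have e1 : ∑ i, ∑ j, matA (p.1 - p.2) i j *
        (pgradLog f p.1 i * pgradLog f p.1 j * (f p.1 * f p.2)) = S1 f p := by
    rw [S1]
    exact Finset.sum_congr rfl fun i _ => Finset.sum_congr rfl fun j _ => by ring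
  have e2 : ∑ i, ∑ j, matA (p.1 - p.2) i j *
        (pgradLog f p.2 i * pgradLog f p.2 j * (f p.1 * f p.2)) = S2 f p := by
    rw [S2]
    exact Finset.sum_congr rfl fun i _ => Finset.sum_congr rfl fun j _ => by ring
  have e3 : ∑ i, ∑ j, matA (p.1 - p.2) i j *
        (pgradLog f p.1 i * pgradLog f p.2 j * (f p.1 * f p.2)) = S3 f p := by
    rw [S3]
    refine Finset.sum_congr rfl fun i _ => Finset.sum_congr rfl fun j _ => ?_
    rw [show pgradLog f p.1 i * pgradLog f p.2 j * (f p.1 * f p.2)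
        = (pgradLog f p.1 i * f p.1) * (pgradLog f p.2 j * f p.2) from by ring,
      pgradLog_mul hf p.1 i, pgradLog_mul hf p.2 j]
  rw [e1, e2, e3]
  ring

end EProof

namespace EProof

variable {d : ℕ} {f : Ed d → ℝ}

lemma hI1 (hf : IsAdmissible f) : Integrable (S1 f) :=
  integrable_finset_sum _ fun i _ => integrable_finset_sum _ fun j _ =>
    t_integrable hf (domb_G hf i j) (domb_f hf) i j

lemma hI2 (hf : IsAdmissible f) : Integrable (S2 f) :=
  integrable_finset_sum _ fun i _ => integrable_finset_sum _ fun j _ =>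
    t_integrable hf (domb_f hf) (domb_G hf i j) i j

lemma hI3 (hf : IsAdmissible f) : Integrable (S3 f) :=
  integrable_finset_sum _ fun i _ => integrable_finset_sum _ fun j _ =>
    t_integrable hf (domb_Df hf i) (domb_Df hf j) i j

lemma S1_val (hf : IsAdmissible f) (hmass : ∫ v : Ed d, f v = 1)
    (hmom : ∀ i, ∫ v : Ed d, v i * f v = 0)
    (henergy : ∫ v : Ed d, ‖v‖ ^ 2 * f v = d) :
    ∫ p : Ed d × Ed d, S1 f p = iFisher (kmat (temperature f)) f := by
  have hkG : ∀ i j : Fin d, Integrable (fun v : Ed d =>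
      (pgradLog f v i * pgradLog f v j * f v) * kmat (temperature f) v i j) := fun i j =>
    ((domb_G hf i j).mul_polyg (polyg_kmat (temperature f) i j)).integrable hf
  have hL : ∫ p : Ed d × Ed d, S1 f p
      = ∑ i, ∑ j, ∫ v : Ed d,
          (pgradLog f v i * pgradLog f v j * f v) * kmat (temperature f) v i j := by
    show ∫ p : Ed d × Ed d, ∑ i, ∑ j, matA (p.1 - p.2) i j *
        ((pgradLog f p.1 i * pgradLog f p.1 j * f p.1) * f p.2) = _
    rw [integral_finset_sum _ fun i _ => integrable_finset_sum _ fun j _ =>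
      t_integrable hf (domb_G hf i j) (domb_f hf) i j]
    refine Finset.sum_congr rfl fun i _ => ?_
    rw [integral_finset_sum _ fun j _ => t_integrable hf (domb_G hf i j) (domb_f hf) i j]
    exact Finset.sum_congr rfl fun j _ =>
      fub_W hf hmass hmom henergy (domb_G hf i j) i j
  rw [hL, iFisher]
  rw [show (fun v : Ed d => f v * qf (kmat (temperature f) v) (pgradLog f v))
      = fun v : Ed d => ∑ i, ∑ j,
          (pgradLog f v i * pgradLog f v j * f v) * kmat (temperature f) v i j from
    funext fun v => by
      rw [qf, Finset.mul_sum]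
      exact Finset.sum_congr rfl fun i _ => by
        rw [Finset.mul_sum]
        exact Finset.sum_congr rfl fun j _ => by ring]
  rw [integral_finset_sum _ fun i _ => integrable_finset_sum _ fun j _ => hkG i j]
  exact Finset.sum_congr rfl fun i _ => (integral_finset_sum _ fun j _ => hkG i j).symm

lemma S2_val (hf : IsAdmissible f) :
    ∫ p : Ed d × Ed d, S2 f p = ∫ p : Ed d × Ed d, S1 f p := by
  have hsw : ∀ p : Ed d × Ed d, S2 f p = S1 f (Prod.swap p) := by
    intro p
    rw [S1, S2]
    refine Finset.sum_congr rfl fun i _ => Finset.sum_congr rfl fun j _ => ?_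
    show matA (p.1 - p.2) i j * (f p.1 * (pgradLog f p.2 i * pgradLog f p.2 j * f p.2))
      = matA (p.2 - p.1) i j * ((pgradLog f p.2 i * pgradLog f p.2 j * f p.2) * f p.1)
    rw [show p.2 - p.1 = -(p.1 - p.2) from (neg_sub _ _).symm, matA_neg]
    ring
  rw [integral_congr_ae (Filter.Eventually.of_forall hsw)]
  exact integral_prod_swap (S1 f)

lemma S3_val (hf : IsAdmissible f) (hmass : ∫ v : Ed d, f v = 1)
    (hmom : ∀ i, ∫ v : Ed d, v i * f v = 0) :
    ∫ p : Ed d × Ed d, S3 f p = (d : ℝ) * d - d := by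
  have hL : ∫ p : Ed d × Ed d, S3 f p
      = ∑ i : Fin d, ∑ j : Fin d, (1 - if i = j then (1:ℝ) else 0) := by
    show ∫ p : Ed d × Ed d, ∑ i, ∑ j, matA (p.1 - p.2) i j *
        (fderiv ℝ f p.1 (EuclideanSpace.single i 1)
          * fderiv ℝ f p.2 (EuclideanSpace.single j 1)) = _
    rw [integral_finset_sum _ fun i _ => integrable_finset_sum _ fun j _ =>
      t_integrable hf (domb_Df hf i) (domb_Df hf j) i j]
    refine Finset.sum_congr rfl fun i _ => ?_
    rw [integral_finset_sum _ fun j _ => t_integrable hf (domb_Df hf i) (domb_Df hf j) i j]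
    exact Finset.sum_congr rfl fun j _ => cross_val hf hmass hmom i j
  rw [hL]
  simp only [Finset.sum_sub_distrib, Finset.sum_const, Finset.card_univ, Fintype.card_fin,
    nsmul_eq_mul, Finset.sum_ite_eq, Finset.mem_univ, if_true]
  push_cast
  ring

end EProof



/-- **Lemma 2.4:** `D(f) = i_k(f) − d(d−1)` with `k(v) = a(v) + d·Id − T`. -/
theorem entropyProd_eq_iFisher
    (d : ℕ) (hd : 2 ≤ d) (f : Ed d → ℝ) (hf : IsAdmissible f)
    (hmass : ∫ v : Ed d, f v = 1)
    (hmom : ∀ i, ∫ v : Ed d, v i * f v = 0)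
    (henergy : ∫ v : Ed d, ‖v‖ ^ 2 * f v = d) :
    entropyProd f = iFisher (kmat (temperature f)) f - (d : ℝ) * ((d : ℝ) - 1) := by
  unfold entropyProd
  rw [integral_congr_ae (Filter.Eventually.of_forall (EProof.pointwise_expand hf))]
  have h12 : Integrable (fun p : Ed d × Ed d => EProof.S1 f p + EProof.S2 f p) :=
    (EProof.hI1 hf).add (EProof.hI2 hf)
  have h3' : Integrable (fun p : Ed d × Ed d => 2 * EProof.S3 f p) :=
    (EProof.hI3 hf).const_mul 2
  have esplit : ∫ p : Ed d × Ed d, (EProof.S1 f p + EProof.S2 f p - 2 * EProof.S3 f p)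
      = (∫ p : Ed d × Ed d, (EProof.S1 f p + EProof.S2 f p))
        - ∫ p : Ed d × Ed d, 2 * EProof.S3 f p :=
    MeasureTheory.integral_sub h12 h3'
  have eadd : ∫ p : Ed d × Ed d, (EProof.S1 f p + EProof.S2 f p)
      = (∫ p : Ed d × Ed d, EProof.S1 f p) + ∫ p : Ed d × Ed d, EProof.S2 f p :=
    MeasureTheory.integral_add (EProof.hI1 hf) (EProof.hI2 hf)
  rw [esplit, eadd, EProof.S2_val hf, EProof.S1_val hf hmass hmom henergy,
    MeasureTheory.integral_const_mul, EProof.S3_val hf hmass hmom]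
  ring

end
end

section
/- Let d ≥ 2 and let f be an admissible normalized density on ℝ^d with diagonal temperature matrix T (entries T_i, Σ_i T_i = d). Put F(v,w) := f(v)f(w) and 𝒯 := diag(T,T). Then I_{𝒯−Id}(F) = I_{𝒯−Id}(F/M) − 2 Σ_{1≤i≤d} (T_i − 1)². -/
open MeasureTheory Real

noncomputable section

section AuxLemmas

variable {d : ℕ} {f : Ed d → ℝ}

lemma IsAdmissible.hasFDerivAt_log (hf : IsAdmissible f) (v : Ed d) :
    HasFDerivAt (fun x => Real.log (f x)) ((f v)⁻¹ • fderiv ℝ f v) v :=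
  ((hf.smooth.differentiable (by simp)) v).hasFDerivAt.log (hf.pos v).ne'

lemma IsAdmissible.pgradLog_eq (hf : IsAdmissible f) (v : Ed d) (i : Fin d) :
    pgradLog f v i = (f v)⁻¹ * fderiv ℝ f v (EuclideanSpace.single i 1) := by
  rw [pgradLog, (hf.hasFDerivAt_log v).fderiv]
  simp

lemma IsAdmissible.f_mul_pgradLog (hf : IsAdmissible f) (v : Ed d) (i : Fin d) :
    f v * pgradLog f v i = fderiv ℝ f v (EuclideanSpace.single i 1) := by
  rw [hf.pgradLog_eq v i, ← mul_assoc, mul_inv_cancel₀ (hf.pos v).ne', one_mul]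

lemma IsAdmissible.continuous_pgradLog (hf : IsAdmissible f) (i : Fin d) :
    Continuous fun v => pgradLog f v i := by
  have h : (fun v => pgradLog f v i)
      = fun v => (f v)⁻¹ * fderiv ℝ f v (EuclideanSpace.single i 1) :=
    funext fun v => hf.pgradLog_eq v i
  rw [h]
  exact (hf.smooth.continuous.inv₀ fun v => (hf.pos v).ne').mul
    ((ContinuousLinearMap.apply ℝ ℝ (EuclideanSpace.single i 1)).continuous.comp
      (hf.smooth.continuous_fderiv (by simp)))

lemma IsAdmissible.pgradLog_bound (hf : IsAdmissible f) :
    ∃ C : ℝ, ∃ k : ℕ, 0 ≤ C ∧ ∀ (v : Ed d) (i : Fin d), |pgradLog f v i| ≤ C * (1 + ‖v‖) ^ k := by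
  obtain ⟨C, k, h⟩ := hf.gradLog_poly
  refine ⟨max C 0, k, le_max_right _ _, fun v i => ?_⟩
  have h1 : |pgradLog f v i| ≤ ‖fderiv ℝ (fun y => Real.log (f y)) v‖ := by
    rw [pgradLog, ← Real.norm_eq_abs]
    calc ‖fderiv ℝ (fun y => Real.log (f y)) v (EuclideanSpace.single i 1)‖
        ≤ ‖fderiv ℝ (fun y => Real.log (f y)) v‖ * ‖(EuclideanSpace.single i 1 : Ed d)‖ :=
          ContinuousLinearMap.le_opNorm _ _
      _ = ‖fderiv ℝ (fun y => Real.log (f y)) v‖ := by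
          rw [EuclideanSpace.norm_single, norm_one, mul_one]
  refine h1.trans ((h v).trans ?_)
  have : (0:ℝ) ≤ (1 + ‖v‖) ^ k := by positivity
  exact mul_le_mul_of_nonneg_right (le_max_left _ _) this

lemma integrable_of_poly_decay {h : Ed d → ℝ} (hc : Continuous h) (C : ℝ)
    (hb : ∀ x, |h x| * (1 + ‖x‖) ^ (d + 1) ≤ C) : Integrable h := by
  have h1 : Integrable (fun x : Ed d => (1 + ‖x‖) ^ (-((d:ℝ) + 1))) :=
    integrable_one_add_norm (by rw [finrank_euclideanSpace_fin]; norm_num)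
  have h2 : ∀ x : Ed d, (1 + ‖x‖) ^ (-((d:ℝ) + 1)) = ((1 + ‖x‖) ^ (d + 1))⁻¹ := by
    intro x
    rw [show ((d:ℝ) + 1) = ((d + 1 : ℕ) : ℝ) by push_cast; ring]
    rw [Real.rpow_neg (by positivity), Real.rpow_natCast]
  have h3 : Integrable (fun x : Ed d => C * ((1 + ‖x‖) ^ (d + 1))⁻¹) := by
    refine (h1.const_mul C).congr (Filter.Eventually.of_forall fun x => ?_)
    simp only []
    rw [h2]
  refine h3.mono' hc.aestronglyMeasurable (Filter.Eventually.of_forall fun x => ?_)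
  rw [Real.norm_eq_abs]
  have hp : (0:ℝ) < (1 + ‖x‖) ^ (d + 1) := by positivity
  rw [show C * ((1 + ‖x‖) ^ (d + 1))⁻¹ = C / ((1 + ‖x‖) ^ (d + 1)) by ring, le_div_iff₀ hp]
  exact hb x

lemma IsAdmissible.integrable_mul (hf : IsAdmissible f) {g : Ed d → ℝ} (hg : Continuous g)
    {C : ℝ} {k : ℕ} (hgb : ∀ v, |g v| ≤ C * (1 + ‖v‖) ^ k) :
    Integrable fun v => f v * g v := by
  obtain ⟨C0, hC0⟩ := hf.decay 0 (k + (d + 1))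
  refine integrable_of_poly_decay (hf.smooth.continuous.mul hg) (C * C0) fun x => ?_
  have h1 : f x * (1 + ‖x‖) ^ (k + (d + 1)) ≤ C0 := by
    have := hC0 x
    rwa [norm_iteratedFDeriv_zero, Real.norm_eq_abs, abs_of_pos (hf.pos x)] at this
  have hC : 0 ≤ C := by
    have h := (abs_nonneg (g x)).trans (hgb x)
    have hp : (0:ℝ) < (1 + ‖x‖) ^ k := by positivity
    nlinarith
  calc |f x * g x| * (1 + ‖x‖) ^ (d + 1)
      = (f x * |g x|) * (1 + ‖x‖) ^ (d + 1) := by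
        rw [abs_mul, abs_of_pos (hf.pos x)]
    _ ≤ (f x * (C * (1 + ‖x‖) ^ k)) * (1 + ‖x‖) ^ (d + 1) := by
        exact mul_le_mul_of_nonneg_right
          (mul_le_mul_of_nonneg_left (hgb x) (hf.pos x).le) (by positivity)
    _ = C * (f x * (1 + ‖x‖) ^ (k + (d + 1))) := by rw [pow_add]; ring
    _ ≤ C * C0 := mul_le_mul_of_nonneg_left h1 hC

lemma IsAdmissible.integrable (hf : IsAdmissible f) : Integrable f := by
  have := hf.integrable_mul continuous_const (C := 1) (k := 0)
    (fun v => by simp : ∀ v : Ed d, |(1:ℝ)| ≤ 1 * (1 + ‖v‖) ^ 0)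
  simpa using this

lemma IsAdmissible.integrable_fderiv_mul (hf : IsAdmissible f) (i : Fin d) {g : Ed d → ℝ}
    (hg : Continuous g) {C : ℝ} {k : ℕ} (hgb : ∀ v, |g v| ≤ C * (1 + ‖v‖) ^ k) :
    Integrable fun v => fderiv ℝ f v (EuclideanSpace.single i 1) * g v := by
  obtain ⟨C0, hC0⟩ := hf.decay 1 (k + (d + 1))
  have hcont : Continuous fun v => fderiv ℝ f v (EuclideanSpace.single i 1) :=
    (ContinuousLinearMap.apply ℝ ℝ (EuclideanSpace.single i 1)).continuous.comp
      (hf.smooth.continuous_fderiv (by simp))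
  refine integrable_of_poly_decay (hcont.mul hg) (C * C0) fun x => ?_
  have hD : |fderiv ℝ f x (EuclideanSpace.single i 1)| ≤ ‖iteratedFDeriv ℝ 1 f x‖ := by
    rw [← Real.norm_eq_abs]
    calc ‖fderiv ℝ f x (EuclideanSpace.single i 1)‖
        ≤ ‖fderiv ℝ f x‖ * ‖(EuclideanSpace.single i 1 : Ed d)‖ :=
          ContinuousLinearMap.le_opNorm _ _
      _ = ‖fderiv ℝ f x‖ := by rw [EuclideanSpace.norm_single, norm_one, mul_one]
      _ = ‖iteratedFDeriv ℝ 1 f x‖ := by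
          rw [← norm_iteratedFDeriv_fderiv (n := 0), norm_iteratedFDeriv_zero]
  have h1 : ‖iteratedFDeriv ℝ 1 f x‖ * (1 + ‖x‖) ^ (k + (d + 1)) ≤ C0 := hC0 x
  have hC : 0 ≤ C := by
    have h := (abs_nonneg (g x)).trans (hgb x)
    have hp : (0:ℝ) < (1 + ‖x‖) ^ k := by positivity
    nlinarith
  calc |fderiv ℝ f x (EuclideanSpace.single i 1) * g x| * (1 + ‖x‖) ^ (d + 1)
      = (|fderiv ℝ f x (EuclideanSpace.single i 1)| * |g x|) * (1 + ‖x‖) ^ (d + 1) := by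
        rw [abs_mul]
    _ ≤ (‖iteratedFDeriv ℝ 1 f x‖ * (C * (1 + ‖x‖) ^ k)) * (1 + ‖x‖) ^ (d + 1) := by
        exact mul_le_mul_of_nonneg_right
          (mul_le_mul hD (hgb x) (abs_nonneg _) (norm_nonneg _)) (by positivity)
    _ = C * (‖iteratedFDeriv ℝ 1 f x‖ * (1 + ‖x‖) ^ (k + (d + 1))) := by rw [pow_add]; ring
    _ ≤ C * C0 := mul_le_mul_of_nonneg_left h1 hC

lemma abs_coord_le_norm (x : Ed d) (j : Fin d) : |x j| ≤ ‖x‖ := by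
  rw [EuclideanSpace.norm_eq, ← Real.sqrt_sq_eq_abs]
  refine Real.sqrt_le_sqrt ?_
  have : x j ^ 2 = ‖x j‖ ^ 2 := by rw [Real.norm_eq_abs, sq_abs]
  rw [this]
  exact Finset.single_le_sum (f := fun i => ‖x i‖ ^ 2) (fun i _ => sq_nonneg _)
    (Finset.mem_univ j)

lemma coord_poly_bound (j : Fin d) : ∀ x : Ed d, |x j| ≤ 1 * (1 + ‖x‖) ^ 1 := fun x =>
  (abs_coord_le_norm x j).trans (by simp)

lemma continuous_coord (j : Fin d) : Continuous fun v : Ed d => v j := by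
  have : (fun v : Ed d => v j) = fun v => EuclideanSpace.proj (𝕜 := ℝ) j v := by
    funext v; simp
  rw [this]
  exact (EuclideanSpace.proj j : Ed d →L[ℝ] ℝ).continuous


lemma mul_poly_bound {g1 g2 : Ed d → ℝ} {C1 C2 : ℝ} {k1 k2 : ℕ}
    (h1 : ∀ v, |g1 v| ≤ C1 * (1 + ‖v‖) ^ k1) (h2 : ∀ v, |g2 v| ≤ C2 * (1 + ‖v‖) ^ k2) :
    ∀ v : Ed d, |g1 v * g2 v| ≤ (C1 * C2) * (1 + ‖v‖) ^ (k1 + k2) := fun v => by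
  rw [abs_mul, pow_add]
  calc |g1 v| * |g2 v| ≤ (C1 * (1 + ‖v‖) ^ k1) * (C2 * (1 + ‖v‖) ^ k2) :=
      mul_le_mul (h1 v) (h2 v) (abs_nonneg _) ((abs_nonneg _).trans (h1 v))
    _ = C1 * C2 * ((1 + ‖v‖) ^ k1 * (1 + ‖v‖) ^ k2) := by ring

lemma integral_f_coord_coord (i j : Fin d) :
    ∫ v : Ed d, f v * (v i * v j) = temperature f i j := by
  have h : (fun v : Ed d => f v * (v i * v j)) = fun v => v i * v j * f v :=
    funext fun v => by ring
  rw [h]; rfl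

lemma IsAdmissible.integral_f_pgradLog_coord (hf : IsAdmissible f)
    (hmass : ∫ v : Ed d, f v = 1) (i j : Fin d) :
    ∫ v : Ed d, f v * (pgradLog f v i * v j) = -(if i = j then (1:ℝ) else 0) := by
  have hco : ⇑(EuclideanSpace.proj j : Ed d →L[ℝ] ℝ) = fun v : Ed d => v j := by
    funext v; simp [PiLp.proj_apply]
  have hrw : (fun v : Ed d => f v * (pgradLog f v i * v j))
      = fun v => fderiv ℝ f v (EuclideanSpace.single i 1)
          * (EuclideanSpace.proj j : Ed d →L[ℝ] ℝ) v := by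
    funext v; rw [← mul_assoc, hf.f_mul_pgradLog, hco]
  have hf'g : Integrable fun x : Ed d =>
      fderiv ℝ f x (EuclideanSpace.single i 1) * (EuclideanSpace.proj j : Ed d →L[ℝ] ℝ) x := by
    rw [show (fun x : Ed d => fderiv ℝ f x (EuclideanSpace.single i 1)
        * (EuclideanSpace.proj j : Ed d →L[ℝ] ℝ) x)
      = fun x : Ed d => fderiv ℝ f x (EuclideanSpace.single i 1) * x j by rw [hco]]
    exact hf.integrable_fderiv_mul i (continuous_coord j) (coord_poly_bound j)
  have hfg' : Integrable fun x : Ed d =>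
      f x * fderiv ℝ (⇑(EuclideanSpace.proj j : Ed d →L[ℝ] ℝ)) x
        (EuclideanSpace.single i 1) := by
    simp only [ContinuousLinearMap.fderiv]
    exact hf.integrable.mul_const _
  have hfg : Integrable fun x : Ed d => f x * (EuclideanSpace.proj j : Ed d →L[ℝ] ℝ) x := by
    rw [show (fun x : Ed d => f x * (EuclideanSpace.proj j : Ed d →L[ℝ] ℝ) x)
      = fun x : Ed d => f x * x j by rw [hco]]
    exact hf.integrable_mul (continuous_coord j) (coord_poly_bound j)
  have key := integral_mul_fderiv_eq_neg_fderiv_mul_of_integrable (μ := volume)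
    (v := EuclideanSpace.single i 1) hf'g hfg' hfg
    (fun x _ => hf.smooth.differentiable (by simp) x)
    (fun x _ => (EuclideanSpace.proj j : Ed d →L[ℝ] ℝ).differentiable x)
  rw [hrw]
  have key2 : ∫ x : Ed d, fderiv ℝ f x (EuclideanSpace.single i 1)
      * (EuclideanSpace.proj j : Ed d →L[ℝ] ℝ) x
      = - ∫ x : Ed d, f x * fderiv ℝ (⇑(EuclideanSpace.proj j : Ed d →L[ℝ] ℝ)) x
          (EuclideanSpace.single i 1) := by linarith
  rw [key2]
  simp only [ContinuousLinearMap.fderiv, PiLp.proj_apply, EuclideanSpace.single_apply]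
  by_cases h : i = j
  · subst h; simp [hmass]
  · simp [h, Ne.symm h]


lemma maxwellM_pos (p : Ed d × Ed d) : 0 < maxwellM p := by
  rw [maxwellM]
  have := Real.pi_pos
  positivity

lemma qf_liftedT_sub_one (T : Matrix (Fin d) (Fin d) ℝ) (a b : Fin d → ℝ) :
    qf (liftedT T - 1) (Sum.elim a b)
      = (∑ i, ∑ j, (T i j - if i = j then 1 else 0) * (a i * a j))
      + (∑ i, ∑ j, (T i j - if i = j then 1 else 0) * (b i * b j)) := by
  simp [qf, Fintype.sum_sum_type, liftedT, blockDiag, Matrix.sub_apply, Matrix.one_apply,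
    Matrix.fromBlocks_apply₁₁, Matrix.fromBlocks_apply₁₂, Matrix.fromBlocks_apply₂₁,
    Matrix.fromBlocks_apply₂₂, Sum.inl.injEq, Sum.inr.injEq]

lemma IsAdmissible.hasFDerivAt_logF (hf : IsAdmissible f) (p : Ed d × Ed d) :
    HasFDerivAt (fun q : Ed d × Ed d => Real.log (f q.1 * f q.2))
      ((fderiv ℝ (fun x => Real.log (f x)) p.1).comp
          (ContinuousLinearMap.fst ℝ (Ed d) (Ed d))
        + (fderiv ℝ (fun x => Real.log (f x)) p.2).comp
            (ContinuousLinearMap.snd ℝ (Ed d) (Ed d))) p := by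
  have hL : ∀ v : Ed d, HasFDerivAt (fun x => Real.log (f x))
      (fderiv ℝ (fun x => Real.log (f x)) v) v :=
    fun v => (hf.hasFDerivAt_log v).differentiableAt.hasFDerivAt
  have h1 := (hL p.1).comp p hasFDerivAt_fst
  have h2 := (hL p.2).comp p hasFDerivAt_snd
  have heq : (fun q : Ed d × Ed d => Real.log (f q.1 * f q.2))
      = fun q : Ed d × Ed d => Real.log (f q.1) + Real.log (f q.2) :=
    funext fun q => Real.log_mul (hf.pos q.1).ne' (hf.pos q.2).ne'
  rw [heq]
  exact h1.add h2

lemma IsAdmissible.fullGrad_logF (hf : IsAdmissible f) (p : Ed d × Ed d) :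
    fullGrad (fun q : Ed d × Ed d => Real.log (f q.1 * f q.2)) p
      = Sum.elim (pgradLog f p.1) (pgradLog f p.2) := by
  funext x
  cases x with
  | inl i =>
    simp only [fullGrad, Sum.elim_inl, (hf.hasFDerivAt_logF p).fderiv]
    simp [pgradLog]
  | inr i =>
    simp only [fullGrad, Sum.elim_inr, (hf.hasFDerivAt_logF p).fderiv]
    simp [pgradLog]

lemma norm_sq_hasFDerivAt (x : Ed d) :
    HasFDerivAt (fun y : Ed d => ‖y‖ ^ 2)
      ((fderivInnerCLM ℝ (x, x)).comp
        ((ContinuousLinearMap.id ℝ (Ed d)).prod (ContinuousLinearMap.id ℝ (Ed d)))) x := by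
  have h := HasFDerivAt.inner (𝕜 := ℝ) (hasFDerivAt_id x) (hasFDerivAt_id x)
  have heq : (fun y : Ed d => ‖y‖ ^ 2) = fun y : Ed d => inner (𝕜 := ℝ) y y :=
    funext fun y => (real_inner_self_eq_norm_sq y).symm
  rw [heq]
  exact h

lemma IsAdmissible.fullGrad_logFrel (hf : IsAdmissible f) (p : Ed d × Ed d) :
    fullGrad (fun q : Ed d × Ed d => Real.log (f q.1 * f q.2 / maxwellM q)) p
      = Sum.elim (fun i => pgradLog f p.1 i + p.1 i) (fun i => pgradLog f p.2 i + p.2 i) := by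
  have heq : (fun q : Ed d × Ed d => Real.log (f q.1 * f q.2 / maxwellM q))
      = fun q : Ed d × Ed d => Real.log (f q.1 * f q.2)
          + ((‖q.1‖ ^ 2 + ‖q.2‖ ^ 2) * (2:ℝ)⁻¹ - Real.log (((2 * π) ^ d)⁻¹)) := by
    funext q
    have h1 : f q.1 * f q.2 ≠ 0 := (mul_pos (hf.pos q.1) (hf.pos q.2)).ne'
    have h2 : maxwellM q ≠ 0 := (maxwellM_pos q).ne'
    rw [Real.log_div h1 h2, maxwellM,
      Real.log_mul (by positivity) (Real.exp_pos _).ne', Real.log_exp]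
    ring
  have hsq1 := (norm_sq_hasFDerivAt p.1).comp p (hasFDerivAt_fst (p := p))
  have hsq2 := (norm_sq_hasFDerivAt p.2).comp p (hasFDerivAt_snd (p := p))
  have hn : HasFDerivAt (fun q : Ed d × Ed d =>
      (‖q.1‖ ^ 2 + ‖q.2‖ ^ 2) * (2:ℝ)⁻¹ - Real.log (((2 * π) ^ d)⁻¹)) _ p :=
    ((hsq1.add hsq2).mul_const ((2:ℝ)⁻¹)).sub_const _
  have htot := (hf.hasFDerivAt_logF p).add hn
  have heq2 := htot.fderiv
  funext x
  cases x with
  | inl i =>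
    simp only [fullGrad, Sum.elim_inl]
    rw [heq]; erw [heq2]
    simp [pgradLog, fderivInnerCLM_apply, EuclideanSpace.inner_single_right,
      real_inner_comm]
    ring
  | inr i =>
    simp only [fullGrad, Sum.elim_inr]
    rw [heq]; erw [heq2]
    simp [pgradLog, fderivInnerCLM_apply, EuclideanSpace.inner_single_right,
      real_inner_comm]
    ring


/-- good part -/
def auxPhi {d : ℕ} (f : Ed d → ℝ) : Ed d → ℝ := fun v =>
  ∑ i, ∑ j, (temperature f i j - if i = j then 1 else 0)
    * (pgradLog f v i * pgradLog f v j)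

/-- shifted part -/
def auxChi {d : ℕ} (f : Ed d → ℝ) : Ed d → ℝ := fun v =>
  ∑ i, ∑ j, (temperature f i j - if i = j then 1 else 0)
    * ((pgradLog f v i + v i) * (pgradLog f v j + v j))

lemma integral_prod_split {g h : Ed d → ℝ}
    (hfi : Integrable f) (hmass : ∫ v : Ed d, f v = 1)
    (hg : Integrable fun v => f v * g v) (hh : Integrable fun v => f v * h v) :
    ∫ p : Ed d × Ed d, (f p.1 * f p.2) * (g p.1 + h p.2)
      = (∫ v : Ed d, f v * g v) + ∫ v : Ed d, f v * h v := by
  have h1 : (fun p : Ed d × Ed d => (f p.1 * f p.2) * (g p.1 + h p.2))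
      = fun p : Ed d × Ed d => (fun v => f v * g v) p.1 * f p.2
          + f p.1 * (fun v => f v * h v) p.2 :=
    funext fun p => by simp only []; ring
  have e1 := MeasureTheory.integral_prod_mul (μ := (volume : Measure (Ed d)))
    (ν := (volume : Measure (Ed d))) (fun v => f v * g v) f
  have e2 := MeasureTheory.integral_prod_mul (μ := (volume : Measure (Ed d)))
    (ν := (volume : Measure (Ed d))) f (fun v => f v * h v)
  beta_reduce at e1 e2
  rw [h1, Measure.volume_eq_prod, integral_add (hg.mul_prod hfi) (hfi.mul_prod hh), e1, e2, hmass]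
  ring

end AuxLemmas

/-- **Lemma 4.1:** rewriting the bad term relative to the Maxwellian. -/
theorem IFisher_liftedT_relative
    (d : ℕ) (hd : 2 ≤ d) (f : Ed d → ℝ) (hf : IsAdmissible f)
    (hnorm : IsNormalized f) :
    IFisher (fun _ => liftedT (temperature f) - 1) (fun p : Ed d × Ed d => f p.1 * f p.2)
      = IFisherRel (fun _ => liftedT (temperature f) - 1)
          (fun p : Ed d × Ed d => f p.1 * f p.2)
        - 2 * ∑ i : Fin d, (temperature f i i - 1) ^ 2 := by
  classical
  obtain ⟨C, k, hC0, hCb⟩ := hf.pgradLog_bound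
  have hintLL : ∀ i j : Fin d,
      Integrable fun v : Ed d => f v * (pgradLog f v i * pgradLog f v j) := fun i j =>
    hf.integrable_mul ((hf.continuous_pgradLog i).mul (hf.continuous_pgradLog j))
      (mul_poly_bound (fun v => hCb v i) (fun v => hCb v j))
  have hintLc : ∀ i j : Fin d,
      Integrable fun v : Ed d => f v * (pgradLog f v i * v j) := fun i j =>
    hf.integrable_mul ((hf.continuous_pgradLog i).mul (continuous_coord j))
      (mul_poly_bound (fun v => hCb v i) (coord_poly_bound j))
  have hintcL : ∀ i j : Fin d,
      Integrable fun v : Ed d => f v * (v i * pgradLog f v j) := fun i j =>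
    hf.integrable_mul ((continuous_coord i).mul (hf.continuous_pgradLog j))
      (mul_poly_bound (coord_poly_bound i) (fun v => hCb v j))
  have hintcc : ∀ i j : Fin d,
      Integrable fun v : Ed d => f v * (v i * v j) := fun i j =>
    hf.integrable_mul ((continuous_coord i).mul (continuous_coord j))
      (mul_poly_bound (coord_poly_bound i) (coord_poly_bound j))
  have hintφ : Integrable fun v : Ed d => f v * auxPhi f v := by
    have h1 : (fun v : Ed d => f v * auxPhi f v)
        = fun v : Ed d => ∑ i, ∑ j, (temperature f i j - if i = j then 1 else 0)
            * (f v * (pgradLog f v i * pgradLog f v j)) := by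
      funext v
      rw [auxPhi, Finset.mul_sum]
      refine Finset.sum_congr rfl fun i _ => ?_
      rw [Finset.mul_sum]
      exact Finset.sum_congr rfl fun j _ => by ring
    rw [h1]
    exact integrable_finset_sum _ fun i _ => integrable_finset_sum _ fun j _ =>
      (hintLL i j).const_mul _
  have hintχ : Integrable fun v : Ed d => f v * auxChi f v := by
    have h1 : (fun v : Ed d => f v * auxChi f v)
        = fun v : Ed d => ∑ i, ∑ j, (temperature f i j - if i = j then 1 else 0)
            * (f v * (pgradLog f v i * pgradLog f v j) + (f v * (pgradLog f v i * v j)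
              + (f v * (v i * pgradLog f v j) + f v * (v i * v j)))) := by
      funext v
      rw [auxChi, Finset.mul_sum]
      refine Finset.sum_congr rfl fun i _ => ?_
      rw [Finset.mul_sum]
      exact Finset.sum_congr rfl fun j _ => by ring
    rw [h1]
    exact integrable_finset_sum _ fun i _ => integrable_finset_sum _ fun j _ =>
      (((hintLL i j).add ((hintLc i j).add ((hintcL i j).add (hintcc i j)))).const_mul _)
  -- rewriting the two functionals
  have hIF : IFisher (fun _ => liftedT (temperature f) - 1)
      (fun p : Ed d × Ed d => f p.1 * f p.2)
      = (∫ v : Ed d, f v * auxPhi f v) + ∫ v : Ed d, f v * auxPhi f v := by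
    rw [IFisher, ← integral_prod_split hf.integrable hnorm.mass hintφ hintφ]
    refine integral_congr_ae (Filter.Eventually.of_forall fun p => ?_)
    simp only []
    rw [hf.fullGrad_logF p, qf_liftedT_sub_one]
    simp only [auxPhi]
  have hIRel : IFisherRel (fun _ => liftedT (temperature f) - 1)
      (fun p : Ed d × Ed d => f p.1 * f p.2)
      = (∫ v : Ed d, f v * auxChi f v) + ∫ v : Ed d, f v * auxChi f v := by
    rw [IFisherRel, ← integral_prod_split hf.integrable hnorm.mass hintχ hintχ]
    refine integral_congr_ae (Filter.Eventually.of_forall fun p => ?_)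
    simp only []
    rw [hf.fullGrad_logFrel p, qf_liftedT_sub_one]
    simp only [auxChi]
  -- the difference
  have hterm : ∀ i j : Fin d,
      ∫ v : Ed d, (f v * (pgradLog f v i * v j) + (f v * (v i * pgradLog f v j)
        + f v * (v i * v j)))
      = temperature f i j - 2 * (if i = j then 1 else 0) := by
    intro i j
    have hcLcc : Integrable fun v : Ed d =>
        f v * (v i * pgradLog f v j) + f v * (v i * v j) :=
      (hintcL i j).add (hintcc i j)
    rw [integral_add (hintLc i j) hcLcc, integral_add (hintcL i j) (hintcc i j)]
    have e2 : ∫ v : Ed d, f v * (v i * pgradLog f v j) = -(if i = j then (1:ℝ) else 0) := by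
      have h1 : (fun v : Ed d => f v * (v i * pgradLog f v j))
          = fun v => f v * (pgradLog f v j * v i) := funext fun v => by ring
      rw [h1, hf.integral_f_pgradLog_coord hnorm.mass j i]
      by_cases h : i = j
      · subst h; simp
      · simp [h, Ne.symm h]
    rw [hf.integral_f_pgradLog_coord hnorm.mass i j, e2, integral_f_coord_coord]
    ring
  have hdiff : ∫ v : Ed d, f v * auxChi f v
      = (∫ v : Ed d, f v * auxPhi f v) + ∑ i : Fin d, (temperature f i i - 1) ^ 2 := by
    have hpoint : (fun v : Ed d => f v * auxChi f v)
        = fun v : Ed d => f v * auxPhi f v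
          + ∑ i, ∑ j, (temperature f i j - if i = j then 1 else 0)
            * (f v * (pgradLog f v i * v j) + (f v * (v i * pgradLog f v j)
              + f v * (v i * v j))) := by
      funext v
      rw [auxChi, auxPhi, Finset.mul_sum, Finset.mul_sum, ← Finset.sum_add_distrib]
      refine Finset.sum_congr rfl fun i _ => ?_
      rw [Finset.mul_sum, Finset.mul_sum, ← Finset.sum_add_distrib]
      exact Finset.sum_congr rfl fun j _ => by ring
    have hRint : ∀ i : Fin d, ∀ j : Fin d, Integrable fun v : Ed d =>
        (temperature f i j - if i = j then 1 else 0)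
          * (f v * (pgradLog f v i * v j) + (f v * (v i * pgradLog f v j)
            + f v * (v i * v j))) := fun i j =>
      ((hintLc i j).add ((hintcL i j).add (hintcc i j))).const_mul _
    rw [hpoint, integral_add hintφ (integrable_finset_sum _ fun i _ =>
      integrable_finset_sum _ fun j _ => hRint i j)]
    congr 1
    rw [integral_finset_sum _ fun i _ => integrable_finset_sum _ fun j _ => hRint i j]
    have h1 : ∀ i : Fin d, ∫ v : Ed d, (∑ j, (temperature f i j - if i = j then 1 else 0)
        * (f v * (pgradLog f v i * v j) + (f v * (v i * pgradLog f v j)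
          + f v * (v i * v j))))
        = (temperature f i i - 1) * (temperature f i i - 2) := by
      intro i
      rw [integral_finset_sum _ fun j _ => hRint i j]
      have hj : ∀ j : Fin d, ∫ v : Ed d, (temperature f i j - if i = j then 1 else 0)
          * (f v * (pgradLog f v i * v j) + (f v * (v i * pgradLog f v j)
            + f v * (v i * v j)))
          = (temperature f i j - if i = j then 1 else 0)
            * (temperature f i j - 2 * (if i = j then 1 else 0)) := fun j => by
        rw [MeasureTheory.integral_const_mul, hterm i j]
      rw [Finset.sum_congr rfl fun j _ => hj j]
      rw [Finset.sum_eq_single_of_mem i (Finset.mem_univ i) (fun j _ hji => by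
        rw [hnorm.temp_diag i j (Ne.symm hji)]
        simp [Ne.symm hji])]
      simp
    rw [Finset.sum_congr rfl fun i _ => h1 i]
    have h0 : ∑ i : Fin d, (temperature f i i - 1) = 0 := by
      rw [Finset.sum_sub_distrib, hnorm.temp_trace]
      simp
    have h2 : ∑ i : Fin d, (temperature f i i - 1) * (temperature f i i - 2)
        = ∑ i : Fin d, ((temperature f i i - 1) ^ 2 - (temperature f i i - 1)) :=
      Finset.sum_congr rfl fun i _ => by ring
    rw [h2, Finset.sum_sub_distrib, h0, sub_zero]
  linarith [hIF, hIRel, hdiff]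

end
end
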